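/- arXiv:1010.0492 — 6 statements merged into one kernel-verified Lean document; each statement's English description precedes it below -/
import Mathlib

section
/- If W is frame indifferent, i.e. W(RF) = W(F) for every R ∈ SO(3) and every F ∈ M^{3×3}, and W is differentiable at F ∈ M^{3×3} with det F > 0, then the matrix DW(F)·Fᵀ is symmetric, i.e. DW(F)Fᵀ = F (DW(F))ᵀ. -/
open Matrix

attribute [local instance] Matrix.normedAddCommGroup Matrix.normedSpace

/-- The rotation group SO(3). -/
def SO3 : Set (Matrix (Fin 3) (Fin 3) ℝ) := {R | R * Rᵀ = 1 ∧ R.det = 1}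

/-- The gradient of `W` at `F`, identified with a 3×3 matrix. -/
noncomputable def DW (W : Matrix (Fin 3) (Fin 3) ℝ → ℝ) (F : Matrix (Fin 3) (Fin 3) ℝ) :
    Matrix (Fin 3) (Fin 3) ℝ :=
  Matrix.of fun i j => fderiv ℝ W F (Matrix.single i j 1)

/-!
For a skew-symmetric `A`, the curve `t ↦ exp (t • A)` stays in `SO3`, so frame indifference makes
`t ↦ W (exp (t • A) * F)` constant; differentiating at `t = 0` gives `DW(F) : A F = 0`.
Testing this against `A = Eᵢⱼ - Eⱼᵢ` reads off `(DW(F) Fᵀ)ᵢⱼ - (F DW(F)ᵀ)ᵢⱼ = 0`.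
-/

open NormedSpace

namespace Matrix

variable {m n : Type*} [Fintype m] [DecidableEq m]

theorem exp_mul_transpose_exp_of_transpose_eq_neg {A : Matrix m m ℝ} (hA : Aᵀ = -A) :
    exp A * (exp A)ᵀ = 1 := by
  rw [← exp_transpose, hA, ← exp_add_of_commute _ _ (Commute.refl A).neg_right, add_neg_cancel,
    exp_zero]

/-- Orthogonality only gives `det = ±1`; the sign is fixed because `exp A = exp (A / 2) ^ 2`. -/
theorem det_exp_of_transpose_eq_neg {A : Matrix m m ℝ} (hA : Aᵀ = -A) : (exp A).det = 1 := by
  have hsq : (exp A).det * (exp A).det = 1 := by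
    nth_rw 2 [← det_transpose]
    rw [← det_mul, exp_mul_transpose_exp_of_transpose_eq_neg hA, det_one]
  have hnonneg : 0 ≤ (exp A).det := by
    have hhalf : A = (2⁻¹ : ℝ) • A + (2⁻¹ : ℝ) • A := by rw [← add_smul]; norm_num
    rw [hhalf, exp_add_of_commute _ _ (Commute.refl _), det_mul]
    exact mul_self_nonneg _
  nlinarith

theorem _root_.LinearMap.apply_eq_sum_smul_apply_single {R M : Type*} [Fintype n] [DecidableEq n]
    [CommSemiring R] [AddCommMonoid M] [Module R M] (L : Matrix m n R →ₗ[R] M)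
    (A : Matrix m n R) :
    L A = ∑ i, ∑ j, A i j • L (single i j 1) := by
  conv_lhs => rw [matrix_eq_sum_single A]
  simp only [map_sum, ← LinearMap.map_smul, smul_single, smul_eq_mul, mul_one]

theorem sum_single_sub_single_mul_apply_mul {R : Type*} [Fintype n] [CommRing R]
    (F G : Matrix m n R) (i j : m) :
    ∑ k, ∑ l, ((single i j 1 - single j i 1 : Matrix m m R) * F) k l * G k l =
      (G * Fᵀ) i j - (F * Gᵀ) i j := by
  have hsingle (a b : m) : ∑ k, ∑ l, (single a b (1 : R) * F) k l * G k l = (F * Gᵀ) b a := by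
    rw [Finset.sum_eq_single a (fun k _ hk => by simp [single_mul_apply_of_ne, hk]) (by simp)]
    simp only [single_mul_apply_same, one_mul]
    rfl
  rw [Matrix.sub_mul]
  simp only [sub_apply, sub_mul, Finset.sum_sub_distrib, hsingle]
  rw [← transpose_apply (F * Gᵀ) i j, transpose_mul, transpose_transpose]

end Matrix

theorem exp_mem_SO3 {A : Matrix (Fin 3) (Fin 3) ℝ} (hA : Aᵀ = -A) : exp A ∈ SO3 :=
  ⟨exp_mul_transpose_exp_of_transpose_eq_neg hA, det_exp_of_transpose_eq_neg hA⟩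

theorem fderiv_apply_mul_eq_zero_of_forall_exp_smul_mul_eq {m E : Type*} [Fintype m]
    [DecidableEq m] [NormedAddCommGroup E] [NormedSpace ℝ E] {W : Matrix m m ℝ → E}
    {A F : Matrix m m ℝ} (hdiff : DifferentiableAt ℝ W F)
    (hW : ∀ t : ℝ, W (exp (t • A) * F) = W F) :
    fderiv ℝ W F (A * F) = 0 := by
  -- `HasDerivAt` only sees the topology, so the curve may be differentiated with the operator
  -- norm, which makes the matrices a normed algebra.
  have hcurve : HasDerivAt (fun t : ℝ => exp (t • A) * F) (A * F) 0 := by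
    open scoped Matrix.Norms.Operator in
    have h := (hasDerivAt_exp_smul_const A (0 : ℝ)).mul_const F
    rw [zero_smul, exp_zero, one_mul] at h
    exact h
  have hcomp : HasDerivAt (fun t : ℝ => W (exp (t • A) * F)) (fderiv ℝ W F (A * F)) 0 := by
    refine HasFDerivAt.comp_hasDerivAt (f := fun t : ℝ => exp (t • A) * F) 0 ?_ hcurve
    rw [zero_smul, exp_zero, one_mul]
    exact hdiff.hasFDerivAt
  simp only [hW] at hcomp
  exact hcomp.unique (hasDerivAt_const 0 _)

theorem frame_indifference_symmetric_stress_general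
    (W : Matrix (Fin 3) (Fin 3) ℝ → ℝ)
    (hframe : ∀ R ∈ SO3, ∀ F, W (R * F) = W F)
    (F : Matrix (Fin 3) (Fin 3) ℝ)
    (hdiff : DifferentiableAt ℝ W F) :
    DW W F * Fᵀ = F * (DW W F)ᵀ := by
  ext i j
  set A : Matrix (Fin 3) (Fin 3) ℝ := single i j 1 - single j i 1
  have hskew (t : ℝ) : (t • A)ᵀ = -(t • A) := by
    rw [transpose_smul, transpose_sub, transpose_single, transpose_single, ← smul_neg, neg_sub]
  have hrot : fderiv ℝ W F (A * F) = 0 :=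
    fderiv_apply_mul_eq_zero_of_forall_exp_smul_mul_eq hdiff
      fun t => hframe _ (exp_mem_SO3 (hskew t)) F
  rw [← ContinuousLinearMap.coe_coe, LinearMap.apply_eq_sum_smul_apply_single] at hrot
  rw [← sub_eq_zero, ← sum_single_sub_single_mul_apply_mul]
  exact hrot

/-- If `W` is frame indifferent and differentiable at `F` with `det F > 0`, then the
matrix `DW(F) Fᵀ` is symmetric: `DW(F) Fᵀ = F (DW(F))ᵀ`. -/
theorem frame_indifference_symmetric_stress
    (W : Matrix (Fin 3) (Fin 3) ℝ → ℝ)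
    (hframe : ∀ R ∈ SO3, ∀ F, W (R * F) = W F)
    (F : Matrix (Fin 3) (Fin 3) ℝ)
    (hdet : 0 < F.det)
    (hdiff : DifferentiableAt ℝ W F) :
    DW W F * Fᵀ = F * (DW W F)ᵀ :=
  frame_indifference_symmetric_stress_general W hframe F hdiff
end

section
/- Suppose W : M^{3×3} → [0,+∞] satisfies: W is C² in a δ-neighbourhood of SO(3) with D²W bounded there, W = 0 on SO(3) and DW(Id) = 0, and there exists k > 0 with |DW(F)Fᵀ| ≤ k(W(F)+1) for every F with det F > 0. Fix α > 2 and h ∈ (0,1). If G ∈ M^{3×3} is such that det(Id + h^{α-1}G) > 0, and E := h^{-(α-1)} DW(Id + h^{α-1}G)(Id + h^{α-1}G)ᵀ, then there is a constant C (depending only on W, δ, k) such that |E| ≤ C( h^{-(α-1)} W(Id + h^{α-1}G) + |G| ). -/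
open Matrix

attribute [local instance] Matrix.normedAddCommGroup Matrix.normedSpace

/-!
Write `F = 1 + t • G` with `t = h ^ (α - 1)`. If `t ‖G‖ ≤ δ / 2`, then `F` lies in the `δ`-ball
around the identity, on which the second differential of `W` is bounded by `K`; the mean value
inequality and `DW(1) = 0` give `‖DW(F)‖ ≤ K t ‖G‖`, so `t⁻¹ ‖DW(F) Fᵀ‖ = O(‖G‖)`. Otherwise
`t⁻¹ < 2 ‖G‖ / δ`, and the growth condition gives
`t⁻¹ ‖DW(F) Fᵀ‖ ≤ k t⁻¹ W(F) + (2k / δ) ‖G‖`.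
-/

namespace Matrix

variable {α l m n : Type*} [Fintype l] [Fintype m] [Fintype n]

theorem norm_single [NormedAddCommGroup α] [DecidableEq m] [DecidableEq n] (i : m) (j : n)
    (c : α) : ‖single i j c‖ = ‖c‖ := by
  refine le_antisymm ((norm_le_iff (norm_nonneg c)).2 fun i' j' => ?_) ?_
  · rw [single_apply]
    split_ifs <;> simp
  · simpa using norm_entry_le_entrywise_sup_norm (single i j c) (i := i) (j := j)

theorem norm_one_le [NormedRing α] [NormOneClass α] [DecidableEq n] :
    ‖(1 : Matrix n n α)‖ ≤ 1 := by
  refine (norm_le_iff zero_le_one).2 fun i j => ?_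
  rw [one_apply]
  split_ifs <;> simp

theorem norm_mul_le_card_mul [NormedRing α] (A : Matrix l m α) (B : Matrix m n α) :
    ‖A * B‖ ≤ Fintype.card m * ‖A‖ * ‖B‖ := by
  refine (norm_le_iff (by positivity)).2 fun i j => ?_
  calc ‖(A * B) i j‖ ≤ ∑ k, ‖A i k * B k j‖ := by rw [mul_apply]; exact norm_sum_le _ _
    _ ≤ ∑ _k : m, ‖A‖ * ‖B‖ := by
      gcongr with k
      exact (norm_mul_le _ _).trans (mul_le_mul (norm_entry_le_entrywise_sup_norm A)
        (norm_entry_le_entrywise_sup_norm B) (norm_nonneg _) (norm_nonneg _))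
    _ = Fintype.card m * ‖A‖ * ‖B‖ := by simp [mul_assoc]

end Matrix

section SecondDerivative

variable {E F : Type*} [NormedAddCommGroup E] [NormedSpace ℝ E] [NormedAddCommGroup F]
  [NormedSpace ℝ F]

theorem norm_fderiv_fderiv (f : E → F) (x : E) :
    ‖fderiv ℝ (fderiv ℝ f) x‖ = ‖iteratedFDeriv ℝ 2 f x‖ := by
  rw [← norm_iteratedFDeriv_one, norm_iteratedFDeriv_fderiv]

theorem norm_fderiv_apply_le_of_fderiv_eq_zero {f : E → F} {s : Set E} {K : ℝ}
    (hs : Convex ℝ s) (hso : IsOpen s) (hf : ContDiffOn ℝ 2 f s)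
    (bound : ∀ z ∈ s, ‖iteratedFDeriv ℝ 2 f z‖ ≤ K) {x y : E} (hx : x ∈ s) (hy : y ∈ s)
    (hx0 : fderiv ℝ f x = 0) (v : E) : ‖fderiv ℝ f y v‖ ≤ K * ‖y - x‖ * ‖v‖ := by
  have hdiff : ∀ z ∈ s, DifferentiableAt ℝ (fderiv ℝ f) z := fun z hz =>
    ((hf.contDiffAt (hso.mem_nhds hz)).fderiv_right (m := 1) le_rfl).differentiableAt
      one_ne_zero
  have hmv := hs.norm_image_sub_le_of_norm_fderiv_le hdiff
    (fun z hz => (norm_fderiv_fderiv f z).trans_le (bound z hz)) hx hy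
  rw [hx0, sub_zero] at hmv
  calc ‖fderiv ℝ f y v‖ ≤ ‖fderiv ℝ f y‖ * ‖v‖ := ContinuousLinearMap.le_opNorm _ v
    _ ≤ K * ‖y - x‖ * ‖v‖ := by gcongr

end SecondDerivative

theorem norm_DW_le_of_norm_fderiv_apply_le {W : Matrix (Fin 3) (Fin 3) ℝ → ℝ}
    {F : Matrix (Fin 3) (Fin 3) ℝ} {C : ℝ} (hC : ∀ v, ‖fderiv ℝ W F v‖ ≤ C * ‖v‖) :
    ‖DW W F‖ ≤ C := by
  have hentry : ∀ i j, ‖DW W F i j‖ ≤ C := fun i j => by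
    simpa [DW, norm_single] using hC (single i j 1)
  exact (norm_le_iff ((norm_nonneg _).trans (hentry 0 0))).2 hentry

theorem one_mem_SO3 : (1 : Matrix (Fin 3) (Fin 3) ℝ) ∈ SO3 := ⟨by simp, by simp⟩

theorem ball_one_subset_infDist_SO3_lt (δ : ℝ) :
    Metric.ball (1 : Matrix (Fin 3) (Fin 3) ℝ) δ ⊆ {F | Metric.infDist F SO3 < δ} :=
  fun _ hF => (Metric.infDist_le_dist_of_mem one_mem_SO3).trans_lt hF

section ScaledStress

variable {W : Matrix (Fin 3) (Fin 3) ℝ → ℝ} {δ K : ℝ}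

theorem norm_DW_le_of_mem_ball (hC2 : ContDiffOn ℝ 2 W {F | Metric.infDist F SO3 < δ})
    (hD2bd : ∀ F ∈ {F : Matrix (Fin 3) (Fin 3) ℝ | Metric.infDist F SO3 < δ},
      ‖iteratedFDeriv ℝ 2 W F‖ ≤ K)
    (hDWid : fderiv ℝ W (1 : Matrix (Fin 3) (Fin 3) ℝ) = 0) {F : Matrix (Fin 3) (Fin 3) ℝ}
    (hF : F ∈ Metric.ball 1 δ) : ‖DW W F‖ ≤ K * ‖F - 1‖ := by
  have hsub := ball_one_subset_infDist_SO3_lt δ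
  exact norm_DW_le_of_norm_fderiv_apply_le <| norm_fderiv_apply_le_of_fderiv_eq_zero
    (convex_ball _ δ) Metric.isOpen_ball (hC2.mono hsub) (fun z hz => hD2bd z (hsub hz))
    (Metric.mem_ball_self (Metric.pos_of_mem_ball hF)) hF hDWid

theorem inv_mul_norm_stress_le_of_small (hδ : 0 < δ)
    (hC2 : ContDiffOn ℝ 2 W {F | Metric.infDist F SO3 < δ})
    (hD2bd : ∀ F ∈ {F : Matrix (Fin 3) (Fin 3) ℝ | Metric.infDist F SO3 < δ},
      ‖iteratedFDeriv ℝ 2 W F‖ ≤ K)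
    (hDWid : fderiv ℝ W (1 : Matrix (Fin 3) (Fin 3) ℝ) = 0) {t : ℝ} (ht : 0 < t)
    {G : Matrix (Fin 3) (Fin 3) ℝ} (hsmall : t * ‖G‖ ≤ δ / 2) :
    t⁻¹ * ‖DW W (1 + t • G) * (1 + t • G)ᵀ‖ ≤ 3 * K * (1 + δ / 2) * ‖G‖ := by
  have hdist : ‖1 + t • G - 1‖ = t * ‖G‖ := by simp [norm_smul, abs_of_pos ht]
  have hDW : ‖DW W (1 + t • G)‖ ≤ K * (t * ‖G‖) := by
    refine hdist ▸ norm_DW_le_of_mem_ball hC2 hD2bd hDWid ?_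
    rw [Metric.mem_ball, dist_eq_norm, hdist]
    linarith
  have hF : ‖(1 + t • G)ᵀ‖ ≤ 1 + δ / 2 := by
    rw [norm_transpose]
    refine (norm_add_le _ _).trans (add_le_add norm_one_le ?_)
    rwa [norm_smul, Real.norm_of_nonneg ht.le]
  calc t⁻¹ * ‖DW W (1 + t • G) * (1 + t • G)ᵀ‖
      ≤ t⁻¹ * (3 * (K * (t * ‖G‖)) * (1 + δ / 2)) := by
        gcongr
        refine (norm_mul_le_card_mul _ _).trans ?_
        have : 0 ≤ K * (t * ‖G‖) := (norm_nonneg _).trans hDW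
        simp only [Fintype.card_fin, Nat.cast_ofNat]
        gcongr
    _ = 3 * K * (1 + δ / 2) * ‖G‖ := by field_simp

theorem inv_mul_norm_stress_le_of_large (hδ : 0 < δ) {k : ℝ} (hk : 0 ≤ k) {t : ℝ} (ht : 0 < t)
    {G : Matrix (Fin 3) (Fin 3) ℝ} (hlarge : δ / 2 < t * ‖G‖)
    (hgrowth : ‖DW W (1 + t • G) * (1 + t • G)ᵀ‖ ≤ k * (W (1 + t • G) + 1)) :
    t⁻¹ * ‖DW W (1 + t • G) * (1 + t • G)ᵀ‖ ≤
      k * (t⁻¹ * W (1 + t • G)) + 2 * k / δ * ‖G‖ := by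
  have htinv : t⁻¹ ≤ 2 / δ * ‖G‖ :=
    calc t⁻¹ = 2 / δ * (δ / 2) * t⁻¹ := by field_simp
      _ ≤ 2 / δ * (t * ‖G‖) * t⁻¹ := by gcongr
      _ = 2 / δ * ‖G‖ := by field_simp
  calc t⁻¹ * ‖DW W (1 + t • G) * (1 + t • G)ᵀ‖ ≤ t⁻¹ * (k * (W (1 + t • G) + 1)) := by gcongr
    _ = k * (t⁻¹ * W (1 + t • G)) + k * t⁻¹ := by ring
    _ ≤ k * (t⁻¹ * W (1 + t • G)) + k * (2 / δ * ‖G‖) := by gcongr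
    _ = k * (t⁻¹ * W (1 + t • G)) + 2 * k / δ * ‖G‖ := by ring

end ScaledStress

theorem scaled_stress_estimate_general
    (W : Matrix (Fin 3) (Fin 3) ℝ → ℝ)
    (hWnonneg : ∀ F, 0 ≤ W F)
    (δ k K : ℝ) (hδ : 0 < δ) (hk : 0 < k)
    (hC2 : ContDiffOn ℝ 2 W {F | Metric.infDist F SO3 < δ})
    (hD2bd : ∀ F ∈ {F : Matrix (Fin 3) (Fin 3) ℝ | Metric.infDist F SO3 < δ},
      ‖iteratedFDeriv ℝ 2 W F‖ ≤ K)
    (hDWid : fderiv ℝ W (1 : Matrix (Fin 3) (Fin 3) ℝ) = 0)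
    (hH7 : ∀ F : Matrix (Fin 3) (Fin 3) ℝ, 0 < F.det → ‖DW W F * Fᵀ‖ ≤ k * (W F + 1)) :
    ∃ C : ℝ, 0 < C ∧ ∀ α : ℝ, 2 < α → ∀ h : ℝ, h ∈ Set.Ioo (0 : ℝ) 1 →
      ∀ G : Matrix (Fin 3) (Fin 3) ℝ,
        0 < (1 + h ^ (α - 1) • G).det →
        ‖(h ^ (α - 1))⁻¹ •
            (DW W (1 + h ^ (α - 1) • G) * (1 + h ^ (α - 1) • G)ᵀ)‖ ≤
          C * ((h ^ (α - 1))⁻¹ * W (1 + h ^ (α - 1) • G) + ‖G‖) := by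
  have hK : 0 ≤ K := (norm_nonneg _).trans
    (hD2bd 1 (ball_one_subset_infDist_SO3_lt δ (Metric.mem_ball_self hδ)))
  refine ⟨3 * K * (1 + δ / 2) + k + 2 * k / δ, by positivity, fun α _ h hh G hdet => ?_⟩
  set t := h ^ (α - 1)
  have ht : 0 < t := Real.rpow_pos_of_pos hh.1 _
  have hW : 0 ≤ t⁻¹ * W (1 + t • G) := mul_nonneg (inv_nonneg.2 ht.le) (hWnonneg _)
  have hG := norm_nonneg G
  have hA : 0 ≤ 3 * K * (1 + δ / 2) := by positivity
  have hD : 0 ≤ 2 * k / δ := by positivity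
  rw [norm_smul, Real.norm_of_nonneg (inv_nonneg.2 ht.le)]
  rcases le_or_gt (t * ‖G‖) (δ / 2) with hsmall | hlarge
  · have := inv_mul_norm_stress_le_of_small hδ hC2 hD2bd hDWid ht hsmall
    linarith [mul_nonneg hA hW, mul_nonneg hk.le hW, mul_nonneg hD hW, mul_nonneg hk.le hG,
      mul_nonneg hD hG]
  · have := inv_mul_norm_stress_le_of_large hδ hk.le ht hlarge (hH7 _ hdet)
    linarith [mul_nonneg hA hW, mul_nonneg hD hW, mul_nonneg hA hG, mul_nonneg hk.le hG]

/-- Pointwise estimate on the scaled stress: if `W` is `C²` with bounded second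
differential near `SO(3)`, vanishes on `SO(3)` with `DW(Id) = 0`, and satisfies the
growth condition `|DW(F)Fᵀ| ≤ k(W(F)+1)` for `det F > 0`, then the scaled stress
`E = h^{-(α-1)} DW(Id + h^{α-1}G)(Id + h^{α-1}G)ᵀ` satisfies
`|E| ≤ C (h^{-(α-1)} W(Id + h^{α-1}G) + |G|)` with `C` depending only on `W`, `δ`, `k`. -/
theorem scaled_stress_estimate
    (W : Matrix (Fin 3) (Fin 3) ℝ → ℝ)
    (hWnonneg : ∀ F, 0 ≤ W F)
    (δ k K : ℝ) (hδ : 0 < δ) (hk : 0 < k)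
    (hC2 : ContDiffOn ℝ 2 W {F | Metric.infDist F SO3 < δ})
    (hD2bd : ∀ F ∈ {F : Matrix (Fin 3) (Fin 3) ℝ | Metric.infDist F SO3 < δ},
      ‖iteratedFDeriv ℝ 2 W F‖ ≤ K)
    (hzero : ∀ R ∈ SO3, W R = 0)
    (hDWid : fderiv ℝ W (1 : Matrix (Fin 3) (Fin 3) ℝ) = 0)
    (hH7 : ∀ F : Matrix (Fin 3) (Fin 3) ℝ, 0 < F.det → ‖DW W F * Fᵀ‖ ≤ k * (W F + 1)) :
    ∃ C : ℝ, 0 < C ∧ ∀ α : ℝ, 2 < α → ∀ h : ℝ, h ∈ Set.Ioo (0 : ℝ) 1 →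
      ∀ G : Matrix (Fin 3) (Fin 3) ℝ,
        0 < (1 + h ^ (α - 1) • G).det →
        ‖(h ^ (α - 1))⁻¹ •
            (DW W (1 + h ^ (α - 1) • G) * (1 + h ^ (α - 1) • G)ᵀ)‖ ≤
          C * ((h ^ (α - 1))⁻¹ * W (1 + h ^ (α - 1) • G) + ‖G‖) :=
  scaled_stress_estimate_general W hWnonneg δ k K hδ hk hC2 hD2bd hDWid hH7
end

section
/- Let L > 0, 𝔼 > 0, and let Q₁ be a positive definite quadratic form on skew-symmetric 3×3 matrices. For f₂, f₃ ∈ L²(0,L), define on H = W^{1,2}(0,L) × W^{2,2}(0,L) × W^{2,2}(0,L) × W^{1,2}(0,L) the von Kármán rod functional 𝒥₃(u,v₂,v₃,w) := ½∫₀^L 𝔼 (u' + ½[(v₂')²+(v₃')²])² dx₁ + ½∫₀^L Q₁(A') dx₁ − ∫₀^L (f₂v₂ + f₃v₃) dx₁ on the class 𝒜 := {(u,v₂,v₃,w) ∈ H : u(0)=v₂(0)=v₂'(0)=v₃(0)=v₃'(0)=w(0)=0}, where A is the skew-symmetric matrix field with A₂₁ = v₂', A₃₁ = v₃', A₃₂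 = w. Then 𝒥₃ has at most one stationary point on 𝒜, and this stationary point (when it exists) is a global minimum point. -/
/-!
Along a line `p + t q` the functional is a quartic polynomial in `t`, so its Gâteaux derivative
is the linear coefficient. At a stationary point `p`, the axial variation `(∫₀ˣ ε, 0, 0, 0)` shows
that the membrane strain `ε = u' + ((v₂')² + (v₃')²)/2` vanishes. The cross term of the
expansion is then exactly the first variation, so for every admissible `r`
`𝒥₃(r) = 𝒥₃(p) + ½ ∫ 𝔼 ε_r² + Q₁(A_r' - A_p')`, which is minimality. For a second stationary
point `q` this forces `A_q' = A_p'`, hence `v₂, v₃, w` agree by the boundary conditions at `0`,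
and so does `u`, as both strains vanish.
-/

open Matrix MeasureTheory intervalIntegral

/-- A point of the space `H = W^{1,2} × W^{2,2} × W^{2,2} × W^{1,2}`, represented by
four real functions. -/
structure RodPt where
  u : ℝ → ℝ
  v2 : ℝ → ℝ
  v3 : ℝ → ℝ
  w : ℝ → ℝ

/-- The skew-symmetric matrix `A'` with `A'₂₁ = a`, `A'₃₁ = b`, `A'₃₂ = c`. -/
def Amat (a b c : ℝ) : Matrix (Fin 3) (Fin 3) ℝ :=
  !![0, -a, -b; a, 0, -c; b, c, 0]

/-- The von Kármán rod functional `𝒥₃`. -/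
noncomputable def Jfun (L EE : ℝ) (Q1 : QuadraticForm ℝ (Matrix (Fin 3) (Fin 3) ℝ))
    (f2 f3 : ℝ → ℝ) (p : RodPt) : ℝ :=
  (1 / 2) * ∫ x in (0 : ℝ)..L,
      (EE * (deriv p.u x + ((deriv p.v2 x) ^ 2 + (deriv p.v3 x) ^ 2) / 2) ^ 2 +
        Q1 (Amat (deriv (deriv p.v2) x) (deriv (deriv p.v3) x) (deriv p.w x))) -
    ∫ x in (0 : ℝ)..L, (f2 x * p.v2 x + f3 x * p.v3 x)

/-- The admissible class `𝒜`: regularity plus zero boundary conditions at `0`. -/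
def Adm (p : RodPt) : Prop :=
  ContDiff ℝ 1 p.u ∧ ContDiff ℝ 2 p.v2 ∧ ContDiff ℝ 2 p.v3 ∧ ContDiff ℝ 1 p.w ∧
    p.u 0 = 0 ∧ p.v2 0 = 0 ∧ deriv p.v2 0 = 0 ∧ p.v3 0 = 0 ∧ deriv p.v3 0 = 0 ∧ p.w 0 = 0

/-- The point `p + t q`. -/
def addRod (p q : RodPt) (t : ℝ) : RodPt :=
  ⟨fun x => p.u x + t * q.u x, fun x => p.v2 x + t * q.v2 x,
    fun x => p.v3 x + t * q.v3 x, fun x => p.w x + t * q.w x⟩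

/-- `p` is a stationary point of `𝒥₃` on `𝒜`: the Gâteaux derivative of `𝒥₃` at `p`
vanishes along every admissible variation. -/
def Stationary (L EE : ℝ) (Q1 : QuadraticForm ℝ (Matrix (Fin 3) (Fin 3) ℝ))
    (f2 f3 : ℝ → ℝ) (p : RodPt) : Prop :=
  Adm p ∧ ∀ q : RodPt, Adm q →
    HasDerivAt (fun t : ℝ => Jfun L EE Q1 f2 f3 (addRod p q t)) 0 0


open Set QuadraticMap

theorem QuadraticMap.continuous_of_finiteDimensional {E : Type*} [NormedAddCommGroup E]
    [NormedSpace ℝ E] [FiniteDimensional ℝ E] (Q : QuadraticForm ℝ E) : Continuous Q := by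
  have h : ⇑Q = fun x => (polarBilin Q).toContinuousBilinearMap x x / 2 := by
    ext x
    simp [polar_self]
  rw [h]
  exact ((polarBilin Q).toContinuousBilinearMap.continuous.clm_apply continuous_id).div_const 2

theorem QuadraticMap.map_add_smul {R M : Type*} [CommRing R] [AddCommGroup M] [Module R M]
    (Q : QuadraticForm R M) (x y : M) (t : R) :
    Q (x + t • y) = Q x + t * polar Q x y + t ^ 2 * Q y := by
  have h : Q (x + t • y) = Q x + Q (t • y) + polar Q x (t • y) := by
    rw [polar]
    ring
  rw [h, QuadraticMap.map_smul, polar_smul_right, smul_eq_mul, smul_eq_mul]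
  ring

theorem eqOn_zero_of_integral_eq_zero {f : ℝ → ℝ} {a b : ℝ} (hab : a < b)
    (hf : ContinuousOn f (Icc a b)) (hnn : ∀ x ∈ Icc a b, 0 ≤ f x)
    (h : ∫ x in a..b, f x = 0) : EqOn f 0 (Icc a b) := by
  have hint : IntervalIntegrable f volume a b :=
    (uIcc_of_le hab.le ▸ hf).intervalIntegrable
  have hae := (integral_eq_zero_iff_of_le_of_nonneg_ae hab.le
    (ae_restrict_of_forall_mem measurableSet_Ioc fun x hx => hnn x (Ioc_subset_Icc_self hx))
    hint).1 h
  rw [Measure.restrict_congr_set Ioc_ae_eq_Icc] at hae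
  exact Measure.eqOn_Icc_of_ae_eq volume hab.ne hae hf continuousOn_const

theorem deriv_add_const_mul {f g : ℝ → ℝ} (hf : Differentiable ℝ f) (hg : Differentiable ℝ g)
    (t : ℝ) : deriv (fun x => f x + t * g x) = fun x => deriv f x + t * deriv g x :=
  funext fun x => ((hf x).hasDerivAt.add ((hg x).hasDerivAt.const_mul t)).deriv

theorem eqOn_Icc_of_deriv_eq {E : Type*} [NormedAddCommGroup E] [NormedSpace ℝ E]
    {f g : ℝ → E} {a b : ℝ} (hf : Differentiable ℝ f)
    (hg : Differentiable ℝ g) (hd : ∀ x ∈ Icc a b, deriv f x = deriv g x) (ha : f a = g a) :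
    EqOn f g (Icc a b) :=
  eq_of_has_deriv_right_eq (fun x _ => (hf x).hasDerivAt.hasDerivWithinAt)
    (fun x hx => hd x (Ico_subset_Icc_self hx) ▸ (hg x).hasDerivAt.hasDerivWithinAt)
    hf.continuous.continuousOn hg.continuous.continuousOn ha

theorem hasDerivAt_integral_sum_pow_mul {n : ℕ} {a b : ℝ} (c : Fin (n + 2) → ℝ → ℝ)
    (hc : ∀ k, IntervalIntegrable (c k) volume a b) :
    HasDerivAt (fun t => ∫ x in a..b, ∑ k : Fin (n + 2), t ^ (k : ℕ) * c k x)
      (∫ x in a..b, c 1 x) 0 := by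
  have h : (fun t => ∫ x in a..b, ∑ k : Fin (n + 2), t ^ (k : ℕ) * c k x)
      = fun t => ∑ k : Fin (n + 2), t ^ (k : ℕ) * ∫ x in a..b, c k x := by
    ext t
    rw [intervalIntegral.integral_finsetSum fun k _ => (hc k).const_mul _]
    simp only [intervalIntegral.integral_const_mul]
  rw [h]
  refine (HasDerivAt.fun_sum (u := Finset.univ) fun (k : Fin (n + 2)) _ =>
    (hasDerivAt_pow (k : ℕ) (0 : ℝ)).mul_const (∫ x in a..b, c k x)).congr_deriv ?_
  simp [Fin.sum_univ_succ]

theorem Amat_add_smul (a b c a' b' c' t : ℝ) :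
    Amat (a + t * a') (b + t * b') (c + t * c') = Amat a b c + t • Amat a' b' c' := by
  ext i j
  fin_cases i <;> fin_cases j <;> simp [Amat] <;> ring

theorem Amat_sub (a b c a' b' c' : ℝ) :
    Amat a b c - Amat a' b' c' = Amat (a - a') (b - b') (c - c') := by
  ext i j
  fin_cases i <;> fin_cases j <;> simp [Amat] <;> ring

theorem transpose_Amat (a b c : ℝ) : (Amat a b c)ᵀ = -Amat a b c := by
  ext i j
  fin_cases i <;> fin_cases j <;> simp [Amat]

theorem Amat_eq_zero_iff {a b c : ℝ} : Amat a b c = 0 ↔ a = 0 ∧ b = 0 ∧ c = 0 := by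
  refine ⟨fun h => ⟨?_, ?_, ?_⟩, fun ⟨ha, hb, hc⟩ => ?_⟩
  · simpa [Amat] using congrFun (congrFun h 1) 0
  · simpa [Amat] using congrFun (congrFun h 2) 0
  · simpa [Amat] using congrFun (congrFun h 2) 1
  · ext i j
    fin_cases i <;> fin_cases j <;> simp [Amat, ha, hb, hc]

@[simp]
theorem Amat_zero : Amat 0 0 0 = 0 :=
  Amat_eq_zero_iff.2 ⟨rfl, rfl, rfl⟩

theorem Amat_inj {a b c a' b' c' : ℝ} :
    Amat a b c = Amat a' b' c' ↔ a = a' ∧ b = b' ∧ c = c' := by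
  rw [← sub_eq_zero, Amat_sub, Amat_eq_zero_iff, sub_eq_zero, sub_eq_zero, sub_eq_zero]

section SkewPositive

variable {Q : QuadraticForm ℝ (Matrix (Fin 3) (Fin 3) ℝ)}

theorem apply_Amat_nonneg (hQ : ∀ F : Matrix (Fin 3) (Fin 3) ℝ, Fᵀ = -F → F ≠ 0 → 0 < Q F)
    (a b c : ℝ) : 0 ≤ Q (Amat a b c) := by
  by_cases h : Amat a b c = 0
  · simp [h]
  · exact (hQ _ (transpose_Amat a b c) h).le

theorem Amat_eq_zero_of_apply_eq_zero
    (hQ : ∀ F : Matrix (Fin 3) (Fin 3) ℝ, Fᵀ = -F → F ≠ 0 → 0 < Q F) {a b c : ℝ}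
    (h : Q (Amat a b c) = 0) : Amat a b c = 0 := by
  by_contra hne
  exact (hQ _ (transpose_Amat a b c) hne).ne' h

end SkewPositive

theorem QuadraticMap.continuous_of_matrix {m n : Type*} [Fintype m] [Fintype n]
    (Q : QuadraticForm ℝ (Matrix m n ℝ)) : Continuous Q :=
  -- `Matrix` carries no norm instance; its topology is the one of `m → n → ℝ`.
  @continuous_of_finiteDimensional (m → n → ℝ) _ _ _ Q

namespace RodPt

variable (p q : RodPt)

noncomputable def strain (x : ℝ) : ℝ :=
  deriv p.u x + ((deriv p.v2 x) ^ 2 + (deriv p.v3 x) ^ 2) / 2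

noncomputable def strainVar (x : ℝ) : ℝ :=
  deriv q.u x + deriv p.v2 x * deriv q.v2 x + deriv p.v3 x * deriv q.v3 x

noncomputable def curv (x : ℝ) : Matrix (Fin 3) (Fin 3) ℝ :=
  Amat (deriv (deriv p.v2) x) (deriv (deriv p.v3) x) (deriv p.w x)

def load (f2 f3 : ℝ → ℝ) (x : ℝ) : ℝ :=
  f2 x * p.v2 x + f3 x * p.v3 x

theorem apply_curv_sub_nonneg {Q : QuadraticForm ℝ (Matrix (Fin 3) (Fin 3) ℝ)}
    (hQ : ∀ F : Matrix (Fin 3) (Fin 3) ℝ, Fᵀ = -F → F ≠ 0 → 0 < Q F) (x : ℝ) :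
    0 ≤ Q (q.curv x - p.curv x) := by
  rw [curv, curv, Amat_sub]
  exact apply_Amat_nonneg hQ _ _ _

theorem load_addRod (f2 f3 : ℝ → ℝ) (t x : ℝ) :
    (addRod p q t).load f2 f3 x = p.load f2 f3 x + t * q.load f2 f3 x := by
  simp only [load, addRod]
  ring

end RodPt

namespace Adm

open RodPt

variable {p q : RodPt}

theorem continuous_strain (hp : Adm p) : Continuous p.strain := by
  obtain ⟨hu, hv2, hv3, -⟩ := hp
  have := hu.continuous_deriv le_rfl
  have := hv2.continuous_deriv one_le_two
  have := hv3.continuous_deriv one_le_two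
  unfold strain
  fun_prop

theorem continuous_strainVar (hp : Adm p) (hq : Adm q) : Continuous (p.strainVar q) := by
  obtain ⟨-, hv2, hv3, -⟩ := hp
  obtain ⟨hu', hv2', hv3', -⟩ := hq
  have := hu'.continuous_deriv le_rfl
  have := hv2.continuous_deriv one_le_two
  have := hv3.continuous_deriv one_le_two
  have := hv2'.continuous_deriv one_le_two
  have := hv3'.continuous_deriv one_le_two
  unfold strainVar
  fun_prop

theorem continuous_curv (hp : Adm p) : Continuous p.curv := by
  obtain ⟨-, hv2, hv3, hw, -⟩ := hp
  have h2 := hv2.deriv' (n := 1)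
  have h3 := hv3.deriv' (n := 1)
  unfold curv Amat
  fun_prop

theorem addRod (hp : Adm p) (hq : Adm q) (t : ℝ) : Adm (addRod p q t) := by
  obtain ⟨hu, hv2, hv3, hw, hu0, hv20, hv2'0, hv30, hv3'0, hw0⟩ := hp
  obtain ⟨hu', hv2', hv3', hw', hu0', hv20', hv2'0', hv30', hv3'0', hw0'⟩ := hq
  refine ⟨by fun_prop, by fun_prop, by fun_prop, by fun_prop, ?_, ?_, ?_, ?_, ?_, ?_⟩ <;>
    simp [_root_.addRod, deriv_add_const_mul (hv2.differentiable two_ne_zero)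
      (hv2'.differentiable two_ne_zero), deriv_add_const_mul (hv3.differentiable two_ne_zero)
      (hv3'.differentiable two_ne_zero), *]

theorem strain_addRod (hp : Adm p) (hq : Adm q) (t x : ℝ) :
    (_root_.addRod p q t).strain x = p.strain x + t * p.strainVar q x
      + t ^ 2 * (((deriv q.v2 x) ^ 2 + (deriv q.v3 x) ^ 2) / 2) := by
  obtain ⟨hu, hv2, hv3, -⟩ := hp
  obtain ⟨hu', hv2', hv3', -⟩ := hq
  simp only [strain, strainVar, _root_.addRod,
    deriv_add_const_mul (hu.differentiable one_ne_zero) (hu'.differentiable one_ne_zero),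
    deriv_add_const_mul (hv2.differentiable two_ne_zero) (hv2'.differentiable two_ne_zero),
    deriv_add_const_mul (hv3.differentiable two_ne_zero) (hv3'.differentiable two_ne_zero)]
  ring

theorem curv_addRod (hp : Adm p) (hq : Adm q) (t x : ℝ) :
    (_root_.addRod p q t).curv x = p.curv x + t • q.curv x := by
  obtain ⟨-, hv2, hv3, hw, -⟩ := hp
  obtain ⟨-, hv2', hv3', hw', -⟩ := hq
  simp only [curv, _root_.addRod,
    deriv_add_const_mul (hv2.differentiable two_ne_zero) (hv2'.differentiable two_ne_zero),
    deriv_add_const_mul (hv3.differentiable two_ne_zero) (hv3'.differentiable two_ne_zero),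
    deriv_add_const_mul hv2.differentiable_deriv_two hv2'.differentiable_deriv_two,
    deriv_add_const_mul hv3.differentiable_deriv_two hv3'.differentiable_deriv_two,
    deriv_add_const_mul (hw.differentiable one_ne_zero) (hw'.differentiable one_ne_zero),
    Amat_add_smul]

end Adm

noncomputable def RodPt.energy (EE : ℝ) (Q1 : QuadraticForm ℝ (Matrix (Fin 3) (Fin 3) ℝ))
    (p : RodPt) (x : ℝ) : ℝ :=
  EE * p.strain x ^ 2 + Q1 (p.curv x)

noncomputable def RodPt.energyVar (EE : ℝ) (Q1 : QuadraticForm ℝ (Matrix (Fin 3) (Fin 3) ℝ))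
    (p q : RodPt) (x : ℝ) : ℝ :=
  2 * EE * (p.strain x * p.strainVar q x) + polar Q1 (p.curv x) (q.curv x)

noncomputable def firstVariation (L EE : ℝ) (Q1 : QuadraticForm ℝ (Matrix (Fin 3) (Fin 3) ℝ))
    (f2 f3 : ℝ → ℝ) (p q : RodPt) : ℝ :=
  (1 / 2) * (∫ x in (0 : ℝ)..L, p.energyVar EE Q1 q x) - L / 2 * ∫ x in (0 : ℝ)..L, q.load f2 f3 x

namespace Adm

open RodPt

variable {L EE : ℝ} {Q1 : QuadraticForm ℝ (Matrix (Fin 3) (Fin 3) ℝ)} {f2 f3 : ℝ → ℝ}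
  {p q : RodPt}

theorem continuous_energy (hp : Adm p) : Continuous (p.energy EE Q1) :=
  continuous_const.mul (hp.continuous_strain.pow 2)
    |>.add ((QuadraticMap.continuous_of_matrix Q1).comp hp.continuous_curv)

theorem continuous_energyVar (hp : Adm p) (hq : Adm q) : Continuous (p.energyVar EE Q1 q) := by
  have := QuadraticMap.continuous_of_matrix Q1
  have := hp.continuous_strain
  have := hp.continuous_strainVar hq
  have := hp.continuous_curv
  have := hq.continuous_curv
  unfold energyVar polar
  fun_prop

theorem intervalIntegrable_load {a b : ℝ} (hp : Adm p) (hf2 : IntervalIntegrable f2 volume a b)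
    (hf3 : IntervalIntegrable f3 volume a b) : IntervalIntegrable (p.load f2 f3) volume a b :=
  (hf2.mul_continuousOn hp.2.1.continuous.continuousOn).add
    (hf3.mul_continuousOn hp.2.2.1.continuous.continuousOn)

theorem integral_load_addRod {a b : ℝ} (hp : Adm p) (hq : Adm q)
    (hf2 : IntervalIntegrable f2 volume a b) (hf3 : IntervalIntegrable f3 volume a b) (t : ℝ) :
    ∫ x in a..b, (_root_.addRod p q t).load f2 f3 x
      = (∫ x in a..b, p.load f2 f3 x) + t * ∫ x in a..b, q.load f2 f3 x := by
  simp_rw [load_addRod]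
  rw [intervalIntegral.integral_add (hp.intervalIntegrable_load hf2 hf3)
    ((hq.intervalIntegrable_load hf2 hf3).const_mul t), intervalIntegral.integral_const_mul]

-- The `∫` binder of `Jfun` extends over the subtraction, so the load integral enters as a
-- constant integrated over `[0, L]`.
theorem Jfun_eq (hp : Adm p) : Jfun L EE Q1 f2 f3 p =
    (1 / 2) * (∫ x in (0 : ℝ)..L, p.energy EE Q1 x)
      - L / 2 * ∫ x in (0 : ℝ)..L, p.load f2 f3 x := by
  change (1 / 2) * ∫ x in (0 : ℝ)..L,
    (p.energy EE Q1 x - ∫ y in (0 : ℝ)..L, p.load f2 f3 y) = _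
  rw [intervalIntegral.integral_sub (hp.continuous_energy.intervalIntegrable 0 L)
    intervalIntegrable_const, intervalIntegral.integral_const, smul_eq_mul, sub_zero]
  ring

theorem hasDerivAt_Jfun_addRod (hp : Adm p) (hq : Adm q) (hf2 : IntervalIntegrable f2 volume 0 L)
    (hf3 : IntervalIntegrable f3 volume 0 L) :
    HasDerivAt (fun t => Jfun L EE Q1 f2 f3 (_root_.addRod p q t))
      (firstVariation L EE Q1 f2 f3 p q) 0 := by
  set β : ℝ → ℝ := fun x => ((deriv q.v2 x) ^ 2 + (deriv q.v3 x) ^ 2) / 2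
  set c : Fin (3 + 2) → ℝ → ℝ := ![p.energy EE Q1, p.energyVar EE Q1 q,
    fun x => EE * (p.strainVar q x ^ 2 + 2 * p.strain x * β x) + Q1 (q.curv x),
    fun x => 2 * EE * (p.strainVar q x * β x),
    fun x => EE * β x ^ 2]
  have hc : ∀ k, IntervalIntegrable (c k) volume 0 L := by
    have := hp.continuous_strain
    have := hp.continuous_strainVar hq
    have := hq.continuous_curv
    have := hp.continuous_energy (EE := EE) (Q1 := Q1)
    have := hp.continuous_energyVar hq (EE := EE) (Q1 := Q1)
    have := QuadraticMap.continuous_of_matrix Q1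
    have : Continuous β := by
      have := hq.2.1.continuous_deriv one_le_two
      have := hq.2.2.1.continuous_deriv one_le_two
      fun_prop
    intro k
    refine Continuous.intervalIntegrable ?_ 0 L
    fin_cases k <;> simp [c] <;> fun_prop
  have hJ : (fun t => Jfun L EE Q1 f2 f3 (_root_.addRod p q t)) = fun t =>
      (1 / 2) * (∫ x in (0 : ℝ)..L, ∑ k : Fin (3 + 2), t ^ (k : ℕ) * c k x) -
        L / 2 * ((∫ x in (0 : ℝ)..L, p.load f2 f3 x) + t * ∫ x in (0 : ℝ)..L, q.load f2 f3 x) := by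
    ext t
    rw [(hp.addRod hq t).Jfun_eq, hp.integral_load_addRod hq hf2 hf3]
    congr 3
    ext x
    simp [energy, energyVar, c, β, Fin.sum_univ_succ, hp.strain_addRod hq, hp.curv_addRod hq,
      map_add_smul]
    ring
  rw [hJ]
  refine ((hasDerivAt_integral_sum_pow_mul c hc).const_mul (1 / 2)).sub
    ((((hasDerivAt_id (0 : ℝ)).mul_const _).const_add _).const_mul (L / 2)) |>.congr_deriv ?_
  simp [firstVariation, c]

end Adm

namespace Stationary

open RodPt

variable {L EE : ℝ} {Q1 : QuadraticForm ℝ (Matrix (Fin 3) (Fin 3) ℝ)} {f2 f3 : ℝ → ℝ}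
  {p q : RodPt}

theorem firstVariation_eq_zero (hp : Stationary L EE Q1 f2 f3 p)
    (hf2 : IntervalIntegrable f2 volume 0 L) (hf3 : IntervalIntegrable f3 volume 0 L)
    (hq : Adm q) : firstVariation L EE Q1 f2 f3 p q = 0 :=
  (hp.1.hasDerivAt_Jfun_addRod hq hf2 hf3).unique (hp.2 q hq)

theorem strain_eqOn_zero (hp : Stationary L EE Q1 f2 f3 p) (hL : 0 < L) (hEE : 0 < EE)
    (hf2 : IntervalIntegrable f2 volume 0 L) (hf3 : IntervalIntegrable f3 volume 0 L) :
    EqOn p.strain 0 (Icc 0 L) := by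
  have hcont := hp.1.continuous_strain
  set φ : ℝ → ℝ := fun x => ∫ y in (0 : ℝ)..x, p.strain y
  have hφ : deriv φ = p.strain := funext fun x => hcont.deriv_integral _ 0 x
  have hq : Adm ⟨φ, 0, 0, 0⟩ := by
    refine ⟨contDiff_one_iff_deriv.2 ⟨fun x =>
      (hcont.integral_hasStrictDerivAt 0 x).hasDerivAt.differentiableAt, hφ ▸ hcont⟩,
      contDiff_const, contDiff_const, contDiff_const, ?_⟩
    simp [φ]
  have hcurv : (⟨φ, 0, 0, 0⟩ : RodPt).curv = 0 := by
    ext1 x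
    simp [curv]
  have hvar : EE * ∫ x in (0 : ℝ)..L, p.strain x * p.strain x = 0 := by
    simpa [firstVariation, energyVar, strainVar, load, hφ, hcurv]
      using hp.firstVariation_eq_zero hf2 hf3 hq
  have h0 := eqOn_zero_of_integral_eq_zero hL (hcont.mul hcont).continuousOn
    (fun x _ => mul_self_nonneg _) ((mul_eq_zero.1 hvar).resolve_left hEE.ne')
  exact fun x hx => mul_self_eq_zero.1 (h0 hx)

theorem Jfun_eq_add (hp : Stationary L EE Q1 f2 f3 p) (hL : 0 < L) (hEE : 0 < EE)
    (hf2 : IntervalIntegrable f2 volume 0 L) (hf3 : IntervalIntegrable f3 volume 0 L)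
    {r : RodPt} (hr : Adm r) :
    Jfun L EE Q1 f2 f3 r = Jfun L EE Q1 f2 f3 p
      + (1 / 2) * ∫ x in (0 : ℝ)..L, (EE * r.strain x ^ 2 + Q1 (r.curv x - p.curv x)) := by
  set d := addRod r p (-1)
  have hd : Adm d := hr.addRod hp.1 (-1)
  have hdcurv : ∀ x, d.curv x = r.curv x - p.curv x := fun x => by
    rw [hr.curv_addRod hp.1, neg_one_smul, sub_eq_add_neg]
  have hexcess : Continuous fun x => EE * r.strain x ^ 2 + Q1 (r.curv x - p.curv x) := by
    have := QuadraticMap.continuous_of_matrix Q1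
    have := hr.continuous_strain
    have := hr.continuous_curv
    have := hp.1.continuous_curv
    fun_prop
  have hE : ∫ x in (0 : ℝ)..L, r.energy EE Q1 x = (∫ x in (0 : ℝ)..L, p.energy EE Q1 x)
      + (∫ x in (0 : ℝ)..L, p.energyVar EE Q1 d x)
      + ∫ x in (0 : ℝ)..L, (EE * r.strain x ^ 2 + Q1 (r.curv x - p.curv x)) := by
    have hpE := hp.1.continuous_energy (EE := EE) (Q1 := Q1)
    have hpV := hp.1.continuous_energyVar hd (EE := EE) (Q1 := Q1)
    rw [← intervalIntegral.integral_add (hpE.intervalIntegrable 0 L) (hpV.intervalIntegrable 0 L),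
      ← intervalIntegral.integral_add
        ((hpE.intervalIntegrable 0 L).add (hpV.intervalIntegrable 0 L))
        (hexcess.intervalIntegrable 0 L)]
    refine intervalIntegral.integral_congr fun x hx => ?_
    rw [uIcc_of_le hL.le] at hx
    simp only [energy, energyVar, hp.strain_eqOn_zero hL hEE hf2 hf3 hx, hdcurv, polar,
      Pi.zero_apply, add_sub_cancel]
    ring
  have hvar := hp.firstVariation_eq_zero hf2 hf3 hd
  rw [firstVariation, hr.integral_load_addRod hp.1 hf2 hf3] at hvar
  rw [hr.Jfun_eq, hp.1.Jfun_eq, hE]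
  linear_combination hvar

theorem Jfun_le (hp : Stationary L EE Q1 f2 f3 p) (hL : 0 < L) (hEE : 0 < EE)
    (hQ : ∀ F : Matrix (Fin 3) (Fin 3) ℝ, Fᵀ = -F → F ≠ 0 → 0 < Q1 F)
    (hf2 : IntervalIntegrable f2 volume 0 L) (hf3 : IntervalIntegrable f3 volume 0 L)
    {r : RodPt} (hr : Adm r) : Jfun L EE Q1 f2 f3 p ≤ Jfun L EE Q1 f2 f3 r := by
  rw [hp.Jfun_eq_add hL hEE hf2 hf3 hr, le_add_iff_nonneg_right]
  exact mul_nonneg (by norm_num) (intervalIntegral.integral_nonneg hL.le fun x _ =>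
    add_nonneg (mul_nonneg hEE.le (sq_nonneg _)) (apply_curv_sub_nonneg p r hQ x))

theorem curv_eqOn (hp : Stationary L EE Q1 f2 f3 p) (hq : Stationary L EE Q1 f2 f3 q)
    (hL : 0 < L) (hEE : 0 < EE)
    (hQ : ∀ F : Matrix (Fin 3) (Fin 3) ℝ, Fᵀ = -F → F ≠ 0 → 0 < Q1 F)
    (hf2 : IntervalIntegrable f2 volume 0 L) (hf3 : IntervalIntegrable f3 volume 0 L) :
    EqOn p.curv q.curv (Icc 0 L) := by
  have hJ := le_antisymm (hq.Jfun_le hL hEE hQ hf2 hf3 hp.1) (hp.Jfun_le hL hEE hQ hf2 hf3 hq.1)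
  have hexcess := hp.Jfun_eq_add hL hEE hf2 hf3 hq.1
  have := hq.1.continuous_strain
  have := hp.1.continuous_curv
  have := hq.1.continuous_curv
  have := QuadraticMap.continuous_of_matrix Q1
  have hnn x : 0 ≤ EE * q.strain x ^ 2 :=
    mul_nonneg hEE.le (sq_nonneg _)
  have h0 := eqOn_zero_of_integral_eq_zero hL (by fun_prop)
    (fun x _ => add_nonneg (hnn x) (apply_curv_sub_nonneg p q hQ x)) (by linarith)
  intro x hx
  have hQx : Q1 (q.curv x - p.curv x) = 0 :=
    ((add_eq_zero_iff_of_nonneg (hnn x) (apply_curv_sub_nonneg p q hQ x)).1 (h0 hx)).2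
  rw [eq_comm, ← sub_eq_zero]
  rw [curv, curv, Amat_sub] at hQx ⊢
  exact Amat_eq_zero_of_apply_eq_zero hQ hQx

theorem eqOn (hp : Stationary L EE Q1 f2 f3 p) (hq : Stationary L EE Q1 f2 f3 q)
    (hL : 0 < L) (hEE : 0 < EE)
    (hQ : ∀ F : Matrix (Fin 3) (Fin 3) ℝ, Fᵀ = -F → F ≠ 0 → 0 < Q1 F)
    (hf2 : IntervalIntegrable f2 volume 0 L) (hf3 : IntervalIntegrable f3 volume 0 L) :
    EqOn p.u q.u (Icc 0 L) ∧ EqOn p.v2 q.v2 (Icc 0 L) ∧ EqOn p.v3 q.v3 (Icc 0 L) ∧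
      EqOn p.w q.w (Icc 0 L) := by
  have hcurv x (hx : x ∈ Icc 0 L) := Amat_inj.1 (hp.curv_eqOn hq hL hEE hQ hf2 hf3 hx)
  obtain ⟨hu, hv2, hv3, hw, hu0, hv20, hv2'0, hv30, hv3'0, hw0⟩ := hp.1
  obtain ⟨hu', hv2', hv3', hw', hu0', hv20', hv2'0', hv30', hv3'0', hw0'⟩ := hq.1
  have hdv2 : EqOn (deriv p.v2) (deriv q.v2) (Icc 0 L) :=
    eqOn_Icc_of_deriv_eq hv2.differentiable_deriv_two hv2'.differentiable_deriv_two
      (fun x hx => (hcurv x hx).1) (hv2'0.trans hv2'0'.symm)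
  have hdv3 : EqOn (deriv p.v3) (deriv q.v3) (Icc 0 L) :=
    eqOn_Icc_of_deriv_eq hv3.differentiable_deriv_two hv3'.differentiable_deriv_two
      (fun x hx => (hcurv x hx).2.1) (hv3'0.trans hv3'0'.symm)
  have hdu : ∀ x ∈ Icc 0 L, deriv p.u x = deriv q.u x := fun x hx => by
    have hps := hp.strain_eqOn_zero hL hEE hf2 hf3 hx
    have hqs := hq.strain_eqOn_zero hL hEE hf2 hf3 hx
    simp only [strain, Pi.zero_apply, hdv2 hx, hdv3 hx] at hps hqs
    linarith
  exact ⟨eqOn_Icc_of_deriv_eq (hu.differentiable one_ne_zero) (hu'.differentiable one_ne_zero)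
      hdu (hu0.trans hu0'.symm),
    eqOn_Icc_of_deriv_eq (hv2.differentiable two_ne_zero) (hv2'.differentiable two_ne_zero)
      hdv2 (hv20.trans hv20'.symm),
    eqOn_Icc_of_deriv_eq (hv3.differentiable two_ne_zero) (hv3'.differentiable two_ne_zero)
      hdv3 (hv30.trans hv30'.symm),
    eqOn_Icc_of_deriv_eq (hw.differentiable one_ne_zero) (hw'.differentiable one_ne_zero)
      (fun x hx => (hcurv x hx).2.2) (hw0.trans hw0'.symm)⟩

end Stationary

/-- The von Kármán rod functional has at most one stationary point on `𝒜`, and any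
stationary point is a global minimum point of `𝒥₃` on `𝒜`. -/
theorem vonKarman_stationary_unique_and_min
    (L EE : ℝ) (hL : 0 < L) (hEE : 0 < EE)
    (Q1 : QuadraticForm ℝ (Matrix (Fin 3) (Fin 3) ℝ))
    (hQ1pos : ∀ F : Matrix (Fin 3) (Fin 3) ℝ, Fᵀ = -F → F ≠ 0 → 0 < Q1 F)
    (f2 f3 : ℝ → ℝ)
    (hf2 : MemLp f2 2 (volume.restrict (Set.Ioo 0 L)))
    (hf3 : MemLp f3 2 (volume.restrict (Set.Ioo 0 L))) :
    (∀ p q : RodPt, Stationary L EE Q1 f2 f3 p → Stationary L EE Q1 f2 f3 q →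
      ∀ x ∈ Set.Icc (0 : ℝ) L,
        p.u x = q.u x ∧ p.v2 x = q.v2 x ∧ p.v3 x = q.v3 x ∧ p.w x = q.w x) ∧
    (∀ p : RodPt, Stationary L EE Q1 f2 f3 p →
      ∀ r : RodPt, Adm r → Jfun L EE Q1 f2 f3 p ≤ Jfun L EE Q1 f2 f3 r) := by
  have hf2' : IntervalIntegrable f2 volume 0 L :=
    (intervalIntegrable_iff_integrableOn_Ioo_of_le hL.le).2 (hf2.integrable one_le_two)
  have hf3' : IntervalIntegrable f3 volume 0 L :=
    (intervalIntegrable_iff_integrableOn_Ioo_of_le hL.le).2 (hf3.integrable one_le_two)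
  refine ⟨fun p q hp hq x hx => ?_, fun p hp r hr => hp.Jfun_le hL hEE hQ1pos hf2' hf3' hr⟩
  obtain ⟨hu, hv2, hv3, hw⟩ := hp.eqOn hq hL hEE hQ1pos hf2' hf3'
  exact ⟨hu hx, hv2 hx, hv3 hx, hw hx⟩
end

section
/- In the setting of the previous statement, fix γ ∈ (0, α−2) and let B_h := {x ∈ Ω : h^{α−1−γ}|G^h(x)| ≤ 1}. Then ∫_{Ω∖B_h} |E^h| dx ≤ C h^{α−1−γ}; in particular (1 − χ_{B_h}) E^h → 0 strongly in L¹(Ω; M^{3×3}) as h → 0. -/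
open Matrix MeasureTheory Filter

attribute [local instance] Matrix.normedAddCommGroup Matrix.normedSpace

/-! On the bad set `{1 < h^{α-1-γ} |G^h|}` one has `|G^h| ≤ h^{α-1-γ} |G^h|²`, so there
`|E^h| ≤ C (h^{-(α-1)} W^h + h^{α-1-γ} |G^h|²)`. Integrating, the energy bound gives
`h^{-(α-1)} ∫ W^h ≤ C h^{α-1}` and the `L²` bound gives `∫ |G^h|² ≤ C²`, so the integral of
`|E^h|` over the bad set is `O(h^{α-1-γ})`, which tends to `0` because `γ < α - 2`. -/

theorem integral_norm_sq_le_of_eLpNorm_le {X E : Type*} [MeasurableSpace X] {μ : Measure X}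
    [NormedAddCommGroup E] {f : X → E} {C : ℝ} (hC : 0 ≤ C) (hf : MemLp f 2 μ)
    (hle : eLpNorm f 2 μ ≤ ENNReal.ofReal C) :
    ∫ x, ‖f x‖ ^ 2 ∂μ ≤ C ^ 2 := by
  rw [hf.eLpNorm_eq_integral_rpow_norm two_ne_zero ENNReal.ofNat_ne_top,
    ENNReal.ofReal_le_ofReal_iff hC] at hle
  rw [ENNReal.toReal_ofNat, ← one_div, ← Real.sqrt_eq_rpow] at hle
  simp only [Real.rpow_two] at hle
  exact (Real.sqrt_le_left hC).mp hle

theorem setIntegral_one_lt_mul_le {X : Type*} [MeasurableSpace X] {μ : Measure X}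
    {f w g : X → ℝ} {C a t : ℝ} (hC : 0 ≤ C) (ha : 0 ≤ a) (ht : 0 ≤ t)
    (hf : 0 ≤ᵐ[μ] f) (hw₀ : 0 ≤ᵐ[μ] w) (hw : Integrable w μ) (hg : MemLp g 2 μ)
    (hfg : ∀ᵐ x ∂μ, f x ≤ C * (a * w x + g x)) :
    ∫ x in {x | 1 < t * g x}, f x ∂μ ≤ C * (a * ∫ x, w x ∂μ + t * ∫ x, g x ^ 2 ∂μ) := by
  set bound : X → ℝ := fun x => C * (a * w x + t * g x ^ 2)
  have hbound : Integrable bound μ :=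
    ((hw.const_mul a).add (hg.integrable_sq.const_mul t)).const_mul C
  have hbound₀ : 0 ≤ᵐ[μ] bound := by
    filter_upwards [hw₀] with x hx
    exact mul_nonneg hC (add_nonneg (mul_nonneg ha hx) (by positivity))
  have hS : NullMeasurableSet {x | 1 < t * g x} μ :=
    aestronglyMeasurable_const.nullMeasurableSet_lt (hg.1.const_mul t)
  calc ∫ x in {x | 1 < t * g x}, f x ∂μ
      ≤ ∫ x in {x | 1 < t * g x}, bound x ∂μ := by
        refine integral_mono_of_nonneg (ae_restrict_of_ae hf) hbound.integrableOn ?_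
        filter_upwards [ae_restrict_of_ae hfg, ae_restrict_mem₀ hS] with x hx hxS
        -- `1 < t g` forces `g > 0`, hence `g ≤ t g²`
        have hxS : 1 < t * g x := hxS
        have hgt : g x ≤ t * g x ^ 2 := by nlinarith
        exact hx.trans (by simp only [bound]; gcongr)
    _ ≤ ∫ x, bound x ∂μ := setIntegral_le_integral hbound hbound₀
    _ = C * (a * ∫ x, w x ∂μ + t * ∫ x, g x ^ 2 ∂μ) := by
        simp only [bound, integral_const_mul,
          integral_add (hw.const_mul a) (hg.integrable_sq.const_mul t)]

theorem tendsto_nhdsWithin_zero_of_le_mul_rpow {s : Set ℝ} {F : ℝ → ℝ} {K c : ℝ}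
    (hc : 0 < c) (hF₀ : ∀ h ∈ s, 0 ≤ F h) (hF : ∀ h ∈ s, F h ≤ K * h ^ c) :
    Tendsto F (nhdsWithin 0 s) (nhds 0) := by
  have hmajorant : Tendsto (fun h : ℝ => K * h ^ c) (nhds 0) (nhds 0) := by
    simpa [Real.zero_rpow hc.ne'] using
      ((Real.continuousAt_rpow_const 0 c (Or.inr hc.le)).tendsto.const_mul K)
  exact tendsto_of_tendsto_of_tendsto_of_le_of_le' tendsto_const_nhds
    (hmajorant.mono_left nhdsWithin_le_nhds)
    (eventually_nhdsWithin_of_forall hF₀) (eventually_nhdsWithin_of_forall hF)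

theorem setIntegral_norm_superlevel_le_mul_rpow {X F₁ F₂ : Type*} [MeasurableSpace X]
    {μ : Measure X} [NormedAddCommGroup F₁] [NormedAddCommGroup F₂] {E : X → F₁} {G : X → F₂}
    {W : X → ℝ} {α c C h : ℝ} (hc : c ≤ α - 1) (hC : 0 ≤ C) (hh : h ∈ Set.Ioo (0 : ℝ) 1)
    (hGmeas : AEStronglyMeasurable G μ) (hG : eLpNorm G 2 μ ≤ ENNReal.ofReal C)
    (hW₀ : ∀ x, 0 ≤ W x) (hW : Integrable W μ) (hWbd : ∫ x, W x ∂μ ≤ C * h ^ (2 * α - 2))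
    (hEG : ∀ᵐ x ∂μ, ‖E x‖ ≤ C * ((h ^ (α - 1))⁻¹ * W x + ‖G x‖)) :
    ∫ x in {x | 1 < h ^ c * ‖G x‖}, ‖E x‖ ∂μ ≤ C * (C + C ^ 2) * h ^ c := by
  have hGL2 : MemLp G 2 μ := ⟨hGmeas, hG.trans_lt ENNReal.ofReal_lt_top⟩
  have hpos (p : ℝ) : 0 < h ^ p := Real.rpow_pos_of_pos hh.1 p
  have hpow : h ^ (α - 1) ≤ h ^ c := Real.rpow_le_rpow_of_exponent_ge hh.1 hh.2.le hc
  calc _ ≤ C * ((h ^ (α - 1))⁻¹ * (∫ x, W x ∂μ) + h ^ c * ∫ x, ‖G x‖ ^ 2 ∂μ) :=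
        setIntegral_one_lt_mul_le hC (inv_nonneg.mpr (hpos _).le) (hpos c).le
          (ae_of_all _ fun _ => norm_nonneg _) (ae_of_all _ hW₀) hW hGL2.norm hEG
    _ ≤ C * ((h ^ (α - 1))⁻¹ * (C * h ^ (2 * α - 2)) + h ^ c * C ^ 2) := by
        refine mul_le_mul_of_nonneg_left (add_le_add ?_ ?_) hC
        · exact mul_le_mul_of_nonneg_left hWbd (inv_pos.mpr (hpos _)).le
        · exact mul_le_mul_of_nonneg_left
            (integral_norm_sq_le_of_eLpNorm_le hC hGL2 hG) (hpos _).le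
    _ = C * (C * h ^ (α - 1) + C ^ 2 * h ^ c) := by
        rw [show 2 * α - 2 = (α - 1) + (α - 1) by ring, Real.rpow_add hh.1]
        field_simp
    _ ≤ C * (C + C ^ 2) * h ^ c := by
        nlinarith [mul_le_mul_of_nonneg_left hpow (by positivity : 0 ≤ C * C)]

theorem stress_vanishes_off_good_set_general
    (n : ℕ) (Ω : Set (Fin n → ℝ))
    (α γ C : ℝ) (hγ : γ ∈ Set.Ioo (0 : ℝ) (α - 2)) (hC : 0 < C)
    (E G : ℝ → (Fin n → ℝ) → Matrix (Fin 3) (Fin 3) ℝ)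
    (Wf : ℝ → (Fin n → ℝ) → ℝ)
    (hGmeas : ∀ h ∈ Set.Ioo (0 : ℝ) 1, AEStronglyMeasurable (G h) (volume.restrict Ω))
    (hG : ∀ h ∈ Set.Ioo (0 : ℝ) 1,
      eLpNorm (G h) 2 (volume.restrict Ω) ≤ ENNReal.ofReal C)
    (hWnonneg : ∀ h ∈ Set.Ioo (0 : ℝ) 1, ∀ x, 0 ≤ Wf h x)
    (hWint : ∀ h ∈ Set.Ioo (0 : ℝ) 1, IntegrableOn (Wf h) Ω)
    (hWbd : ∀ h ∈ Set.Ioo (0 : ℝ) 1, (∫ x in Ω, Wf h x) ≤ C * h ^ (2 * α - 2))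
    (hpt : ∀ h ∈ Set.Ioo (0 : ℝ) 1, ∀ᵐ x ∂(volume.restrict Ω),
      ‖E h x‖ ≤ C * ((h ^ (α - 1))⁻¹ * Wf h x + ‖G h x‖)) :
    ∃ C' : ℝ, 0 < C' ∧
      (∀ h ∈ Set.Ioo (0 : ℝ) 1,
        (∫ x in Ω \ {x ∈ Ω | h ^ (α - 1 - γ) * ‖G h x‖ ≤ 1}, ‖E h x‖) ≤
          C' * h ^ (α - 1 - γ)) ∧
      Tendsto (fun h : ℝ => ∫ x in Ω \ {x ∈ Ω | h ^ (α - 1 - γ) * ‖G h x‖ ≤ 1}, ‖E h x‖)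
        (nhdsWithin 0 (Set.Ioo (0 : ℝ) 1)) (nhds 0) := by
  have hbound : ∀ h ∈ Set.Ioo (0 : ℝ) 1,
      (∫ x in Ω \ {x ∈ Ω | h ^ (α - 1 - γ) * ‖G h x‖ ≤ 1}, ‖E h x‖) ≤
        C * (C + C ^ 2) * h ^ (α - 1 - γ) := by
    intro h hh
    have hbad : Ω \ {x ∈ Ω | h ^ (α - 1 - γ) * ‖G h x‖ ≤ 1} =
        {x | 1 < h ^ (α - 1 - γ) * ‖G h x‖} ∩ Ω := by
      ext x
      simp only [Set.mem_sdiff, Set.mem_inter_iff, Set.mem_ofPred_eq, not_and, not_le]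
      tauto
    rw [hbad, ← Measure.restrict_restrict₀
      (aestronglyMeasurable_const.nullMeasurableSet_lt ((hGmeas h hh).norm.const_mul _))]
    exact setIntegral_norm_superlevel_le_mul_rpow (by linarith [hγ.1]) hC.le hh (hGmeas h hh)
      (hG h hh) (hWnonneg h hh) (hWint h hh) (hWbd h hh) (hpt h hh)
  refine ⟨C * (C + C ^ 2), by positivity, hbound, ?_⟩
  exact tendsto_nhdsWithin_zero_of_le_mul_rpow (by linarith [hγ.2])
    (fun h _ => integral_nonneg fun _ => norm_nonneg _) hbound

/-- In the setting of the stress estimate, with `B_h = {x ∈ Ω : h^{α-1-γ}|G^h(x)| ≤ 1}`,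
one has `∫_{Ω∖B_h} |E^h| ≤ C h^{α-1-γ}`, and hence `(1-χ_{B_h})E^h → 0` in `L¹` as
`h → 0`. -/
theorem stress_vanishes_off_good_set
    (n : ℕ) (Ω : Set (Fin n → ℝ)) (hΩ : MeasurableSet Ω) (hfin : volume Ω < ⊤)
    (α γ C : ℝ) (hα : 2 < α) (hγ : γ ∈ Set.Ioo (0 : ℝ) (α - 2)) (hC : 0 < C)
    (E G : ℝ → (Fin n → ℝ) → Matrix (Fin 3) (Fin 3) ℝ)
    (Wf : ℝ → (Fin n → ℝ) → ℝ)
    (hEint : ∀ h ∈ Set.Ioo (0 : ℝ) 1, IntegrableOn (fun x => ‖E h x‖) Ω)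
    (hGmeas : ∀ h ∈ Set.Ioo (0 : ℝ) 1, AEStronglyMeasurable (G h) (volume.restrict Ω))
    (hG : ∀ h ∈ Set.Ioo (0 : ℝ) 1,
      eLpNorm (G h) 2 (volume.restrict Ω) ≤ ENNReal.ofReal C)
    (hWnonneg : ∀ h ∈ Set.Ioo (0 : ℝ) 1, ∀ x, 0 ≤ Wf h x)
    (hWint : ∀ h ∈ Set.Ioo (0 : ℝ) 1, IntegrableOn (Wf h) Ω)
    (hWbd : ∀ h ∈ Set.Ioo (0 : ℝ) 1, (∫ x in Ω, Wf h x) ≤ C * h ^ (2 * α - 2))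
    (hpt : ∀ h ∈ Set.Ioo (0 : ℝ) 1, ∀ᵐ x ∂(volume.restrict Ω),
      ‖E h x‖ ≤ C * ((h ^ (α - 1))⁻¹ * Wf h x + ‖G h x‖)) :
    ∃ C' : ℝ, 0 < C' ∧
      (∀ h ∈ Set.Ioo (0 : ℝ) 1,
        (∫ x in Ω \ {x ∈ Ω | h ^ (α - 1 - γ) * ‖G h x‖ ≤ 1}, ‖E h x‖) ≤
          C' * h ^ (α - 1 - γ)) ∧
      Tendsto (fun h : ℝ => ∫ x in Ω \ {x ∈ Ω | h ^ (α - 1 - γ) * ‖G h x‖ ≤ 1}, ‖E h x‖)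
        (nhdsWithin 0 (Set.Ioo (0 : ℝ) 1)) (nhds 0) :=
  stress_vanishes_off_good_set_general n Ω α γ C hγ hC E G Wf hGmeas hG hWnonneg hWint hWbd hpt
end

section
/- Let 2 < α < 3 and choose n₀ ∈ ℕ with α > 2 + 1/(2n₀+3). Under the recursive iteration ζ^h_{n₀}(t) = t − ṽ^h(t), ζ^h_n(t) = t − ṽ^h(ζ^h_{n+1}(t)), with hypotheses ‖(ṽ^h)'‖_{L^∞} ≤ C h^{2(α−2)}, ‖y^h₁ − x₁ − ṽ^h(x₁)‖_{L²} ≤ C h^{α−1}, and ‖y^h₁ − x₁‖_{L²} ≤ C h^{2(α−2)}, one has for each n ∈ {1,…,n₀}: ‖ζ^h_n ∘ y^h₁ − x₁‖_{L²} ≤ C h^{α−1} + C h^{2(n₀−n+2)(α−2)}. In particular ‖ζ^h_1 ∘ y^h₁ − x₁‖_{L²} ≤ C h^{α−1} + C h^{2(n₀+1)(α−2)}, and the quantity h^{α−3}(h^{α−1} + h^{2(n₀+1)(α−2)}) tends to 0 as h → 0. -/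
/-!
With `ζ_{-1} = id`, each iterate satisfies
`ζ_m ∘ y - x₁ = (y - x₁ - ṽ(x₁)) + (ṽ(x₁) - ṽ(ζ_{m-1} ∘ y))`, and `ṽ` is Lipschitz with
constant `L = C h^{2(α-2)}` by the mean value theorem. The `L²` errors therefore satisfy
`e_m ≤ A + L e_{m-1}` with `A = C h^{α-1}` and `e_{-1} ≤ C h^{2(α-2)}`, whence
`e_m ≤ A ∑_{i ≤ m} Lⁱ + L^{m+1} e_{-1}`, and the last term is `C^{m+2} h^{2(m+2)(α-2)}`.
The limit is a sum of two powers of `h` with the positive exponents `2α - 4` and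
`(2n₀ + 3)(α - 2) - 1`.
-/

open MeasureTheory Filter

/-- The recursively defined maps: `zrec vt 0 = id - vt`,
`zrec vt (m+1) = id - vt ∘ (zrec vt m)`; with `ζ^h_n = zrec (ṽ^h) (n₀ - n)` this is the
iteration `ζ^h_{n₀}(t) = t - ṽ^h(t)`, `ζ^h_n(t) = t - ṽ^h(ζ^h_{n+1}(t))`. -/
def zrec (vt : ℝ → ℝ) : ℕ → ℝ → ℝ
  | 0 => fun t => t - vt t
  | m + 1 => fun t => t - vt (zrec vt m t)

open Finset
open scoped NNReal ENNReal

theorem ENNReal.le_geom_sum_of_le_add_mul {e : ℕ → ℝ≥0∞} {A L M : ℝ≥0∞}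
    (h₀ : e 0 ≤ A + L * M) (hsucc : ∀ k, e (k + 1) ≤ A + L * e k) (k : ℕ) :
    e k ≤ A * ∑ i ∈ range (k + 1), L ^ i + L ^ (k + 1) * M := by
  induction k with
  | zero => simpa using h₀
  | succ k ih =>
    calc e (k + 1) ≤ A + L * (A * ∑ i ∈ range (k + 1), L ^ i + L ^ (k + 1) * M) := by
          grw [hsucc k, ih]
      _ = A * ∑ i ∈ range (k + 2), L ^ i + L ^ (k + 2) * M := by
          have hshift : L * ∑ i ∈ range (k + 1), L ^ i = ∑ i ∈ range (k + 1), L ^ (i + 1) := by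
            simp only [mul_sum, pow_succ']
          rw [sum_range_succ' _ (k + 1), ← hshift]
          ring

theorem continuous_zrec {v : ℝ → ℝ} (hv : Continuous v) : ∀ k, Continuous (zrec v k)
  | 0 => continuous_id.sub hv
  | k + 1 => continuous_id.sub (hv.comp (continuous_zrec hv k))

section Iterates

variable {X : Type*} [MeasurableSpace X] {μ : Measure X} {p : ℝ≥0∞} {v : ℝ → ℝ} {L : ℝ≥0}
  {y w g : X → ℝ}

theorem eLpNorm_sub_comp_sub_le (hp : 1 ≤ p) (hv : LipschitzWith L v)
    (hy : AEStronglyMeasurable y μ) (hw : AEStronglyMeasurable w μ)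
    (hg : AEStronglyMeasurable g μ) :
    eLpNorm (fun x => y x - v (w x) - g x) p μ ≤
      eLpNorm (fun x => y x - g x - v (g x)) p μ + L * eLpNorm (fun x => w x - g x) p μ := by
  have hvg : AEStronglyMeasurable (fun x => v (g x)) μ :=
    hv.continuous.comp_aestronglyMeasurable hg
  have hvw : AEStronglyMeasurable (fun x => v (w x)) μ :=
    hv.continuous.comp_aestronglyMeasurable hw
  have hsplit : (fun x => y x - v (w x) - g x) =
      (fun x => y x - g x - v (g x)) + fun x => v (g x) - v (w x) := by
    ext x; simp only [Pi.add_apply]; ring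
  have hlip :
      eLpNorm (fun x => v (g x) - v (w x)) p μ ≤ L * eLpNorm (fun x => w x - g x) p μ :=
    eLpNorm_le_nnreal_smul_eLpNorm_of_ae_le_mul (Eventually.of_forall fun x => by
      rw [← nndist_eq_nnnorm, ← nndist_eq_nnnorm, nndist_comm (w x)]
      exact hv.nndist_le _ _) p
  rw [hsplit]
  exact (eLpNorm_add_le ((hy.sub hg).sub hvg) (hvg.sub hvw) hp).trans (add_le_add le_rfl hlip)

theorem eLpNorm_zrec_comp_sub_le (hp : 1 ≤ p) (hv : LipschitzWith L v)
    (hy : AEStronglyMeasurable y μ) (hg : AEStronglyMeasurable g μ) (k : ℕ) :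
    eLpNorm (fun x => zrec v k (y x) - g x) p μ ≤
      eLpNorm (fun x => y x - g x - v (g x)) p μ * ∑ i ∈ range (k + 1), (L : ℝ≥0∞) ^ i +
        (L : ℝ≥0∞) ^ (k + 1) * eLpNorm (fun x => y x - g x) p μ :=
  ENNReal.le_geom_sum_of_le_add_mul (e := fun k => eLpNorm (fun x => zrec v k (y x) - g x) p μ)
    (eLpNorm_sub_comp_sub_le hp hv hy hy hg)
    (fun k => eLpNorm_sub_comp_sub_le hp hv hy
      ((continuous_zrec hv.continuous k).comp_aestronglyMeasurable hy) hg) k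

theorem eLpNorm_zrec_comp_sub_le_ofReal (hp : 1 ≤ p) {a b M : ℝ} (ha : 0 ≤ a) (hb : 0 ≤ b)
    (hM : 0 ≤ M) (hv : LipschitzWith b.toNNReal v) (hy : AEStronglyMeasurable y μ)
    (hg : AEStronglyMeasurable g μ)
    (hyv : eLpNorm (fun x => y x - g x - v (g x)) p μ ≤ ENNReal.ofReal a)
    (hyg : eLpNorm (fun x => y x - g x) p μ ≤ ENNReal.ofReal M) (k : ℕ) :
    eLpNorm (fun x => zrec v k (y x) - g x) p μ ≤
      ENNReal.ofReal (a * ∑ i ∈ range (k + 1), b ^ i + b ^ (k + 1) * M) := by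
  refine (eLpNorm_zrec_comp_sub_le hp hv hy hg k).trans ?_
  rw [ENNReal.ofReal_add (by positivity) (by positivity), ENNReal.ofReal_mul ha,
    ENNReal.ofReal_sum_of_nonneg (fun i _ => by positivity), ENNReal.ofReal_mul (by positivity)]
  simp only [ENNReal.ofReal_pow hb]
  gcongr <;> exact le_rfl

end Iterates

theorem mul_geom_sum_add_pow_le {c s D X : ℝ} (hc : 0 ≤ c) (hcD : c ≤ D) (hD : 1 ≤ D)
    (hs₀ : 0 ≤ s) (hs₁ : s ≤ 1) (hX : 0 ≤ X) {m n : ℕ} (hmn : m < n) :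
    c * X * ∑ i ∈ range (m + 1), (c * s) ^ i + (c * s) ^ (m + 1) * (c * s) ≤
      (n + 1) * D ^ (n + 1) * (X + s ^ (m + 2)) := by
  have hcs : c * s ≤ D := (mul_le_of_le_one_right hc hs₁).trans hcD
  have hsum : ∑ i ∈ range (m + 1), (c * s) ^ i ≤ n * D ^ n := by
    calc ∑ i ∈ range (m + 1), (c * s) ^ i ≤ ∑ i ∈ range (m + 1), D ^ n :=
          sum_le_sum fun i hi => (pow_le_pow_left₀ (by positivity) hcs i).trans
            (pow_le_pow_right₀ hD (by rw [mem_range] at hi; omega))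
      _ ≤ n * D ^ n := by
          rw [sum_const, card_range, nsmul_eq_mul]
          gcongr
          exact_mod_cast hmn
  have hpow : (c * s) ^ (m + 1) * (c * s) ≤ D ^ (n + 1) * s ^ (m + 2) := by
    rw [← pow_succ, mul_pow]
    gcongr
    exact (pow_le_pow_left₀ hc hcD _).trans (pow_le_pow_right₀ hD (by omega))
  calc c * X * ∑ i ∈ range (m + 1), (c * s) ^ i + (c * s) ^ (m + 1) * (c * s)
      ≤ D * X * (n * D ^ n) + D ^ (n + 1) * s ^ (m + 2) := by gcongr
    _ ≤ (n + 1) * D ^ (n + 1) * (X + s ^ (m + 2)) := by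
      have hD₀ : 0 ≤ D ^ (n + 1) := pow_nonneg (by linarith) _
      have hgap : (n + 1) * D ^ (n + 1) * (X + s ^ (m + 2)) -
          (D * X * (n * D ^ n) + D ^ (n + 1) * s ^ (m + 2)) =
            D ^ (n + 1) * X + n * (D ^ (n + 1) * s ^ (m + 2)) := by ring
      linarith [mul_nonneg hD₀ hX,
        mul_nonneg n.cast_nonneg (mul_nonneg hD₀ (pow_nonneg hs₀ (m + 2)))]

theorem tendsto_rpow_nhdsGT_zero {e : ℝ} (he : 0 < e) :
    Tendsto (fun x : ℝ => x ^ e) (nhdsWithin 0 (Set.Ioi 0)) (nhds 0) := by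
  simpa [Real.zero_rpow he.ne'] using
    (Real.continuousAt_rpow_const 0 e (Or.inr he.le)).tendsto.mono_left nhdsWithin_le_nhds

theorem tendsto_rpow_mul_rpow_add_rpow_nhdsGT_zero {a b c : ℝ} (hb : 0 < a + b)
    (hc : 0 < a + c) :
    Tendsto (fun x : ℝ => x ^ a * (x ^ b + x ^ c)) (nhdsWithin 0 (Set.Ioi 0)) (nhds 0) := by
  have hsum := (tendsto_rpow_nhdsGT_zero hb).add (tendsto_rpow_nhdsGT_zero hc)
  rw [add_zero] at hsum
  refine hsum.congr' (eventually_nhdsWithin_of_forall fun x (hx : 0 < x) => ?_)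
  simp only [Real.rpow_add hx, mul_add]

theorem approximate_inverse_iterates_general
    (α : ℝ) (n₀ : ℕ) (hα : 2 < α ∧ α < 3) (hn₀ : 2 + 1 / (2 * (n₀ : ℝ) + 3) < α)
    (C : ℝ) (hC : 0 < C)
    (Ω : Set (ℝ × ℝ × ℝ))
    (y1 : ℝ → ℝ × ℝ × ℝ → ℝ) (vt : ℝ → ℝ → ℝ)
    (hy1 : ∀ h ∈ Set.Ioo (0 : ℝ) 1, AEStronglyMeasurable (y1 h) (volume.restrict Ω))
    (hvt : ∀ h ∈ Set.Ioo (0 : ℝ) 1, Differentiable ℝ (vt h))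
    (hvtd : ∀ h ∈ Set.Ioo (0 : ℝ) 1, ∀ t, |deriv (vt h) t| ≤ C * h ^ (2 * (α - 2)))
    (h1 : ∀ h ∈ Set.Ioo (0 : ℝ) 1,
      eLpNorm (fun x => y1 h x - x.1 - vt h x.1) 2 (volume.restrict Ω) ≤
        ENNReal.ofReal (C * h ^ (α - 1)))
    (h2 : ∀ h ∈ Set.Ioo (0 : ℝ) 1,
      eLpNorm (fun x => y1 h x - x.1) 2 (volume.restrict Ω) ≤
        ENNReal.ofReal (C * h ^ (2 * (α - 2)))) :
    (∃ C' : ℝ, 0 < C' ∧ ∀ h ∈ Set.Ioo (0 : ℝ) 1, ∀ m : ℕ, m < n₀ →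
      eLpNorm (fun x => zrec (vt h) m (y1 h x) - x.1) 2 (volume.restrict Ω) ≤
        ENNReal.ofReal (C' * (h ^ (α - 1) + h ^ (2 * ((m : ℝ) + 2) * (α - 2))))) ∧
    Tendsto (fun h : ℝ => h ^ (α - 3) * (h ^ (α - 1) + h ^ (2 * ((n₀ : ℝ) + 1) * (α - 2))))
      (nhdsWithin 0 (Set.Ioi (0 : ℝ))) (nhds 0) := by
  refine ⟨⟨(n₀ + 1) * (C + 1) ^ (n₀ + 1), by positivity, fun h hh m hm => ?_⟩, ?_⟩
  · have hs₀ : 0 ≤ h ^ (2 * (α - 2)) := Real.rpow_nonneg hh.1.le _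
    have hL₀ : 0 ≤ C * h ^ (2 * (α - 2)) := mul_nonneg hC.le hs₀
    have hs₁ : h ^ (2 * (α - 2)) ≤ 1 := Real.rpow_le_one hh.1.le hh.2.le (by linarith [hα.1])
    have hlip : LipschitzWith (C * h ^ (2 * (α - 2))).toNNReal (vt h) :=
      lipschitzWith_of_nnnorm_deriv_le (hvt h hh) fun t => by
        rw [← NNReal.coe_le_coe, coe_nnnorm, Real.coe_toNNReal _ hL₀]
        exact hvtd h hh t
    have hpow : (h ^ (2 * (α - 2))) ^ (m + 2) = h ^ (2 * ((m : ℝ) + 2) * (α - 2)) := by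
      rw [← Real.rpow_natCast, ← Real.rpow_mul hh.1.le]
      push_cast
      ring_nf
    refine (eLpNorm_zrec_comp_sub_le_ofReal one_le_two
      (mul_nonneg hC.le (Real.rpow_nonneg hh.1.le _)) hL₀ hL₀ hlip (hy1 h hh)
      measurable_fst.aestronglyMeasurable (h1 h hh) (h2 h hh) m).trans
        (ENNReal.ofReal_le_ofReal ?_)
    rw [← hpow]
    exact mul_geom_sum_add_pow_le hC.le (by linarith) (by linarith) hs₀ hs₁
      (Real.rpow_nonneg hh.1.le _) hm
  · have hn₀' : 1 / (2 * (n₀ : ℝ) + 3) < α - 2 := by linarith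
    rw [div_lt_iff₀ (by positivity)] at hn₀'
    exact tendsto_rpow_mul_rpow_add_rpow_nhdsGT_zero (by linarith [hα.1]) (by linarith)

/-- The full iterated estimate: for every `n ∈ {1,…,n₀}` (i.e. `m = n₀ - n < n₀`),
`‖ζ^h_n ∘ y^h₁ - x₁‖_{L²} ≤ C(h^{α-1} + h^{2(n₀-n+2)(α-2)})`; in particular for `n = 1`,
and `h^{α-3}(h^{α-1} + h^{2(n₀+1)(α-2)}) → 0` as `h → 0⁺`. -/
theorem approximate_inverse_iterates
    (α : ℝ) (n₀ : ℕ) (hα : 2 < α ∧ α < 3) (hn₀ : 2 + 1 / (2 * (n₀ : ℝ) + 3) < α)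
    (C : ℝ) (hC : 0 < C)
    (Ω : Set (ℝ × ℝ × ℝ)) (hfin : volume Ω < ⊤)
    (y1 : ℝ → ℝ × ℝ × ℝ → ℝ) (vt : ℝ → ℝ → ℝ)
    (hy1 : ∀ h ∈ Set.Ioo (0 : ℝ) 1, AEStronglyMeasurable (y1 h) (volume.restrict Ω))
    (hvt : ∀ h ∈ Set.Ioo (0 : ℝ) 1, Differentiable ℝ (vt h))
    (hvtd : ∀ h ∈ Set.Ioo (0 : ℝ) 1, ∀ t, |deriv (vt h) t| ≤ C * h ^ (2 * (α - 2)))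
    (h1 : ∀ h ∈ Set.Ioo (0 : ℝ) 1,
      eLpNorm (fun x => y1 h x - x.1 - vt h x.1) 2 (volume.restrict Ω) ≤
        ENNReal.ofReal (C * h ^ (α - 1)))
    (h2 : ∀ h ∈ Set.Ioo (0 : ℝ) 1,
      eLpNorm (fun x => y1 h x - x.1) 2 (volume.restrict Ω) ≤
        ENNReal.ofReal (C * h ^ (2 * (α - 2)))) :
    (∃ C' : ℝ, 0 < C' ∧ ∀ h ∈ Set.Ioo (0 : ℝ) 1, ∀ m : ℕ, m < n₀ →
      eLpNorm (fun x => zrec (vt h) m (y1 h x) - x.1) 2 (volume.restrict Ω) ≤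
        ENNReal.ofReal (C' * (h ^ (α - 1) + h ^ (2 * ((m : ℝ) + 2) * (α - 2))))) ∧
    Tendsto (fun h : ℝ => h ^ (α - 3) * (h ^ (α - 1) + h ^ (2 * ((n₀ : ℝ) + 1) * (α - 2))))
      (nhdsWithin 0 (Set.Ioi (0 : ℝ))) (nhds 0) :=
  approximate_inverse_iterates_general α n₀ hα hn₀ C hC Ω y1 vt hy1 hvt hvtd h1 h2
end

section
/- Let S ⊂ ℝ² be a bounded Lipschitz domain and Ω = (0,L)×S. Suppose F ∈ L²(Ω; M^{3×3}) has symmetric values a.e. and satisfies ∫_Ω (F e₂ · ∂₂φ + F e₃ · ∂₃φ) dx = 0 for every φ ∈ C¹_b(ℝ³;ℝ³) with φ(0,x₂,x₃) = 0 for all (x₂,x₃). Then for a.e. x₁ ∈ (0,L), ∫_S F(x₁,·) e_k dx₂dx₃ = 0 for k = 2,3, and consequently the zeroth moment F̄(x₁) := ∫_S F(x₁,·) dx₂dx₃ has the form F̄ = F̄₁₁ e₁⊗e₁ a.e. in (0,L). -/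
open Matrix MeasureTheory

attribute [local instance] Matrix.normedAddCommGroup Matrix.normedSpace

/-!
Test the weak equation with `φ(x) = g(x₁) ψ(x₂, x₃) eᵢ`, where `g` is a bump function in
`(0, L)` and `ψ` is a smooth compactly supported function agreeing with `x₂` (or `x₃`) on a ball
around `S`. On `Ω` the transverse derivatives of `φ` are `g(x₁) eᵢ` in one direction and `0` in
the other, so the weak equation says `∫_Ω g(x₁) Fᵢₖ = 0` for every such `g`. By Fubini and the
fundamental lemma of the calculus of variations, `∫_S Fᵢₖ(x₁, ·) = 0` for a.e. `x₁` and
`k = 2, 3`; the zeroth moment is then a symmetric matrix whose second and third columns vanish.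
-/

open Set Filter Topology
open scoped ContDiff

lemma ContDiff.exists_bound_fderiv_of_hasCompactSupport {E F : Type*} [NormedAddCommGroup E]
    [NormedSpace ℝ E] [NormedAddCommGroup F] [NormedSpace ℝ F] {φ : E → F}
    (hφ : ContDiff ℝ 1 φ) (hsupp : HasCompactSupport φ) :
    ∃ M : ℝ, ∀ x, ‖φ x‖ ≤ M ∧ ‖fderiv ℝ φ x‖ ≤ M := by
  obtain ⟨M₀, hM₀⟩ := hsupp.exists_bound_of_continuous hφ.continuous
  obtain ⟨M₁, hM₁⟩ := (hsupp.fderiv ℝ).exists_bound_of_continuous (hφ.continuous_fderiv one_ne_zero)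
  exact ⟨max M₀ M₁, fun x => ⟨(hM₀ x).trans (le_max_left _ _), (hM₁ x).trans (le_max_right _ _)⟩⟩

lemma HasCompactSupport.mul_comp_fst_snd {α β : Type*} [TopologicalSpace α] [TopologicalSpace β]
    {g : α → ℝ} {ψ : β → ℝ} (hg : HasCompactSupport g) (hψ : HasCompactSupport ψ) :
    HasCompactSupport fun z : α × β => g z.1 * ψ z.2 := by
  refine .intro' (hg.isCompact.prod hψ.isCompact) ((isClosed_tsupport g).prod (isClosed_tsupport ψ))
    fun z hz => ?_
  rcases not_and_or.1 (mem_prod.not.1 hz) with h | h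
  · rw [image_eq_zero_of_notMem_tsupport h, zero_mul]
  · rw [image_eq_zero_of_notMem_tsupport h, mul_zero]

lemma fderiv_mul_comp_fst_snd_smul_apply_zero_left {E₁ E₂ F : Type*}
    [NormedAddCommGroup E₁] [NormedSpace ℝ E₁] [NormedAddCommGroup E₂] [NormedSpace ℝ E₂]
    [NormedAddCommGroup F] [NormedSpace ℝ F] {g : E₁ → ℝ} {ψ : E₂ → ℝ} (e : F) {x : E₁ × E₂}
    (hg : DifferentiableAt ℝ g x.1) (hψ : DifferentiableAt ℝ ψ x.2) (v : E₂) :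
    fderiv ℝ (fun z : E₁ × E₂ => (g z.1 * ψ z.2) • e) x (0, v) =
      (g x.1 * fderiv ℝ ψ x.2 v) • e := by
  have h : HasFDerivAt (fun z : E₁ × E₂ => (g z.1 * ψ z.2) • e) _ x :=
    ((hg.hasFDerivAt.comp x hasFDerivAt_fst).mul
      (hψ.hasFDerivAt.comp x hasFDerivAt_snd)).smul_const e
  rw [h.fderiv]
  simp

lemma exists_contDiff_hasCompactSupport_fderiv_eqOn_ball {E : Type*} [NormedAddCommGroup E]
    [NormedSpace ℝ E] [FiniteDimensional ℝ E] (c : E →L[ℝ] ℝ) (r : ℝ) :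
    ∃ ψ : E → ℝ, ContDiff ℝ ∞ ψ ∧ HasCompactSupport ψ ∧
      ∀ p ∈ Metric.ball (0 : E) r, fderiv ℝ ψ p = c := by
  let β : ContDiffBump (0 : E) := ⟨max r 1, max r 1 + 1, by positivity, by linarith⟩
  refine ⟨fun p => β p * c p, β.contDiff.mul c.contDiff, β.hasCompactSupport.mul_right,
    fun p hp => ?_⟩
  have hβ : (β : E → ℝ) =ᶠ[𝓝 p] 1 :=
    β.eventuallyEq_one_of_mem_ball (Metric.ball_subset_ball (le_max_left r 1) hp)
  have hψ : (fun q => β q * c q) =ᶠ[𝓝 p] c := hβ.mono fun q hq => by simp [hq]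
  rw [hψ.fderiv_eq, c.fderiv]

lemma MeasureTheory.Measure.volume_restrict_prod {α β : Type*} [MeasureSpace α] [MeasureSpace β]
    [SFinite (volume : Measure α)] [SFinite (volume : Measure β)] (s : Set α) (t : Set β) :
    (volume : Measure (α × β)).restrict (s ×ˢ t) =
      (volume.restrict s).prod (volume.restrict t) := by
  rw [Measure.volume_eq_prod, Measure.prod_restrict]

lemma ae_integral_slice_eq_zero_of_integral_contDiff_mul_eq_zero {E Y : Type*}
    [NormedAddCommGroup E] [NormedSpace ℝ E] [FiniteDimensional ℝ E] [MeasurableSpace E]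
    [BorelSpace E] [MeasurableSpace Y] {μ : Measure E} [SFinite μ] {ν : Measure Y} [SFinite ν]
    {U : Set E} (hU : IsOpen U) {G : E × Y → ℝ} (hG : Integrable G ((μ.restrict U).prod ν))
    (h : ∀ g : E → ℝ, ContDiff ℝ ∞ g → HasCompactSupport g → tsupport g ⊆ U →
      ∫ z, g z.1 * G z ∂(μ.restrict U).prod ν = 0) :
    ∀ᵐ x ∂μ.restrict U, ∫ y, G (x, y) ∂ν = 0 := by
  have hslice := hU.ae_eq_zero_of_integral_contDiff_smul_eq_zero
    (Integrable.integrableOn (Integrable.integral_prod_left hG)).locallyIntegrableOn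
    fun g hg hgsupp hgU => ?_
  · filter_upwards [hslice, ae_restrict_mem hU.measurableSet] with x hx hxU using hx hxU
  obtain ⟨C, hC⟩ := hgsupp.exists_bound_of_continuous hg.continuous
  have hgG : Integrable (fun z : E × Y => g z.1 * G z) ((μ.restrict U).prod ν) :=
    hG.bdd_mul (hg.continuous.measurable.comp measurable_fst).aestronglyMeasurable
      (Eventually.of_forall fun z => hC z.1)
  simp_rw [smul_eq_mul, ← integral_const_mul]
  rw [← integral_prod _ hgG]
  exact h g hg hgsupp hgU

lemma Matrix.IsSymm.eq_smul_single_of_apply_eq_zero {n R : Type*} [DecidableEq n] [Semiring R]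
    {A : Matrix n n R} (hA : A.IsSymm) (k : n) (h : ∀ i j, j ≠ k → A i j = 0) :
    A = A k k • Matrix.single k k 1 := by
  ext i j
  by_cases hj : j = k
  · subst hj
    by_cases hi : i = j
    · simp [hi]
    · simp [single_apply_of_row_ne (Ne.symm hi), ← hA.apply i j, h j i hi]
  · simp [single_apply_of_col_ne _ _ (Ne.symm hj), h i j hj]

/-- Weak form of `∂₂(F e₂) + ∂₃(F e₃) = 0` in `Ω = (0, L) × S`, with natural boundary conditions
on all of `∂Ω` except the face `{x₁ = 0}`. -/
def WeakTransverseDivFree (L : ℝ) (S : Set (ℝ × ℝ))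
    (F : ℝ × ℝ × ℝ → Matrix (Fin 3) (Fin 3) ℝ) : Prop :=
  ∀ φ : ℝ × ℝ × ℝ → Fin 3 → ℝ,
    ContDiff ℝ 1 φ →
    (∃ M : ℝ, ∀ x, ‖φ x‖ ≤ M ∧ ‖fderiv ℝ φ x‖ ≤ M) →
    (∀ p : ℝ × ℝ, φ (0, p) = 0) →
    (∫ x in Set.Ioo 0 L ×ˢ S,
      ((∑ i : Fin 3, F x i 1 * fderiv ℝ φ x (0, 1, 0) i) +
        ∑ i : Fin 3, F x i 2 * fderiv ℝ φ x (0, 0, 1) i)) = 0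

lemma WeakTransverseDivFree.ae_integral_slice_eq_zero {L : ℝ} {S : Set (ℝ × ℝ)}
    {F : ℝ × ℝ × ℝ → Matrix (Fin 3) (Fin 3) ℝ} (hweak : WeakTransverseDivFree L S F)
    (hSbdd : Bornology.IsBounded S)
    (hF : ∀ i j, Integrable (fun x => F x i j) (volume.restrict (Ioo 0 L ×ˢ S)))
    (i : Fin 3) (c : ℝ × ℝ →L[ℝ] ℝ) :
    ∀ᵐ x₁ ∂volume.restrict (Ioo 0 L),
      ∫ p in S, (F (x₁, p) i 1 * c (1, 0) + F (x₁, p) i 2 * c (0, 1)) = 0 := by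
  obtain ⟨r, hSr⟩ := hSbdd.subset_ball 0
  obtain ⟨ψ, hψ, hψsupp, hψc⟩ := exists_contDiff_hasCompactSupport_fderiv_eqOn_ball c r
  have hG : Integrable (fun x => F x i 1 * c (1, 0) + F x i 2 * c (0, 1))
      ((volume.restrict (Ioo 0 L)).prod (volume.restrict S)) := by
    rw [← Measure.volume_restrict_prod]
    exact ((hF i 1).mul_const _).add ((hF i 2).mul_const _)
  refine ae_integral_slice_eq_zero_of_integral_contDiff_mul_eq_zero isOpen_Ioo hG
    fun g hg hgsupp hgU => ?_
  rw [← Measure.volume_restrict_prod]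
  set φ : ℝ × ℝ × ℝ → Fin 3 → ℝ := fun x => (g x.1 * ψ x.2) • Pi.single i 1
  have hφ : ContDiff ℝ 1 φ :=
    (((hg.comp contDiff_fst).mul (hψ.comp contDiff_snd)).smul contDiff_const).of_le
      (by exact_mod_cast le_top)
  have hφsupp : HasCompactSupport φ := (hgsupp.mul_comp_fst_snd hψsupp).smul_right
  have hg0 : g 0 = 0 := image_eq_zero_of_notMem_tsupport fun h => lt_irrefl _ (hgU h).1
  refine (integral_congr_ae ?_).trans
    (hweak φ hφ (hφ.exists_bound_fderiv_of_hasCompactSupport hφsupp) (by simp [φ, hg0]))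
  have hball : ∀ᵐ x ∂volume.restrict (Ioo 0 L ×ˢ S), x.2 ∈ Metric.ball (0 : ℝ × ℝ) r :=
    ae_restrict_of_ae_restrict_of_subset (fun x hx => hSr hx.2)
      (ae_restrict_mem (measurable_snd Metric.isOpen_ball.measurableSet))
  filter_upwards [hball] with x hx
  have hd : ∀ v, fderiv ℝ φ x (0, v) = (g x.1 * c v) • Pi.single i 1 := fun v => by
    rw [fderiv_mul_comp_fst_snd_smul_apply_zero_left _ (hg.differentiable (by simp) _)
      (hψ.differentiable (by simp) _), hψc _ hx]
  simp only [hd, Pi.smul_apply, Pi.single_apply, smul_eq_mul, mul_ite, mul_one, mul_zero,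
    Finset.sum_ite_eq', Finset.mem_univ, ↓reduceIte]
  ring

theorem zeroth_moment_structure_general
    (L : ℝ) (S : Set (ℝ × ℝ))
    (hSbdd : Bornology.IsBounded S)
    (F : ℝ × ℝ × ℝ → Matrix (Fin 3) (Fin 3) ℝ)
    (hFL2 : MemLp F 2 (volume.restrict (Set.Ioo 0 L ×ˢ S)))
    (hFsym : ∀ᵐ x ∂(volume.restrict (Set.Ioo 0 L ×ˢ S)), (F x)ᵀ = F x)
    (hweak : ∀ φ : ℝ × ℝ × ℝ → Fin 3 → ℝ,
      ContDiff ℝ 1 φ →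
      (∃ M : ℝ, ∀ x, ‖φ x‖ ≤ M ∧ ‖fderiv ℝ φ x‖ ≤ M) →
      (∀ p : ℝ × ℝ, φ (0, p) = 0) →
      (∫ x in Set.Ioo 0 L ×ˢ S,
        ((∑ i : Fin 3, F x i 1 * fderiv ℝ φ x (0, 1, 0) i) +
          ∑ i : Fin 3, F x i 2 * fderiv ℝ φ x (0, 0, 1) i)) = 0) :
    ∀ᵐ x₁ ∂(volume.restrict (Set.Ioo 0 L)),
      (∀ i : Fin 3, (∫ p in S, F (x₁, p) i 1) = 0 ∧ (∫ p in S, F (x₁, p) i 2) = 0) ∧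
      (Matrix.of fun i j => ∫ p in S, F (x₁, p) i j) =
        (∫ p in S, F (x₁, p) 0 0) • Matrix.single (0 : Fin 3) (0 : Fin 3) (1 : ℝ) := by
  have : IsFiniteMeasure (volume.restrict (Ioo 0 L ×ˢ S)) :=
    isFiniteMeasure_restrict.2 ((Metric.isBounded_Ioo 0 L).prod hSbdd).measure_lt_top.ne
  have hF : ∀ i j, Integrable (fun x => F x i j) (volume.restrict (Ioo 0 L ×ˢ S)) :=
    fun i j => ((hFL2.eval i).eval j).integrable one_le_two
  have hcol₁ : ∀ i, ∀ᵐ x₁ ∂volume.restrict (Ioo 0 L), ∫ p in S, F (x₁, p) i 1 = 0 := fun i => by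
    simpa using WeakTransverseDivFree.ae_integral_slice_eq_zero hweak hSbdd hF i
      (ContinuousLinearMap.fst ℝ ℝ ℝ)
  have hcol₂ : ∀ i, ∀ᵐ x₁ ∂volume.restrict (Ioo 0 L), ∫ p in S, F (x₁, p) i 2 = 0 := fun i => by
    simpa using WeakTransverseDivFree.ae_integral_slice_eq_zero hweak hSbdd hF i
      (ContinuousLinearMap.snd ℝ ℝ ℝ)
  have hsymm : ∀ᵐ x₁ ∂volume.restrict (Ioo 0 L),
      ∀ᵐ p ∂volume.restrict S, (F (x₁, p))ᵀ = F (x₁, p) :=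
    Measure.ae_ae_of_ae_prod (Measure.volume_restrict_prod (Ioo 0 L) S ▸ hFsym)
  filter_upwards [ae_all_iff.2 hcol₁, ae_all_iff.2 hcol₂, hsymm] with x₁ h₁ h₂ hs
  refine ⟨fun i => ⟨h₁ i, h₂ i⟩, Matrix.IsSymm.eq_smul_single_of_apply_eq_zero ?_ 0 ?_⟩
  · exact Matrix.IsSymm.ext fun i j =>
      integral_congr_ae (hs.mono fun p hp => congrFun (congrFun hp i) j)
  · intro i j hj
    fin_cases j
    exacts [absurd rfl hj, h₁ i, h₂ i]

/-- If a symmetric-valued `F ∈ L²(Ω; M³ˣ³)` on `Ω = (0,L)×S` satisfies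
`∫_Ω (F e₂ · ∂₂φ + F e₃ · ∂₃φ) = 0` for all `φ ∈ C¹_b` vanishing on `{x₁ = 0}`, then for
a.e. `x₁` the averages `∫_S F e₂ = ∫_S F e₃ = 0`, and the zeroth moment
`F̄(x₁) = ∫_S F(x₁,·)` has the form `F̄ = F̄₁₁ e₁⊗e₁`. -/
theorem zeroth_moment_structure
    (L : ℝ) (hL : 0 < L) (S : Set (ℝ × ℝ)) (hSopen : IsOpen S)
    (hSbdd : Bornology.IsBounded S)
    (F : ℝ × ℝ × ℝ → Matrix (Fin 3) (Fin 3) ℝ)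
    (hFL2 : MemLp F 2 (volume.restrict (Set.Ioo 0 L ×ˢ S)))
    (hFsym : ∀ᵐ x ∂(volume.restrict (Set.Ioo 0 L ×ˢ S)), (F x)ᵀ = F x)
    (hweak : ∀ φ : ℝ × ℝ × ℝ → Fin 3 → ℝ,
      ContDiff ℝ 1 φ →
      (∃ M : ℝ, ∀ x, ‖φ x‖ ≤ M ∧ ‖fderiv ℝ φ x‖ ≤ M) →
      (∀ p : ℝ × ℝ, φ (0, p) = 0) →
      (∫ x in Set.Ioo 0 L ×ˢ S,
        ((∑ i : Fin 3, F x i 1 * fderiv ℝ φ x (0, 1, 0) i) +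
          ∑ i : Fin 3, F x i 2 * fderiv ℝ φ x (0, 0, 1) i)) = 0) :
    ∀ᵐ x₁ ∂(volume.restrict (Set.Ioo 0 L)),
      (∀ i : Fin 3, (∫ p in S, F (x₁, p) i 1) = 0 ∧ (∫ p in S, F (x₁, p) i 2) = 0) ∧
      (Matrix.of fun i j => ∫ p in S, F (x₁, p) i j) =
        (∫ p in S, F (x₁, p) 0 0) • Matrix.single (0 : Fin 3) (0 : Fin 3) (1 : ℝ) :=
  zeroth_moment_structure_general L S hSbdd F hFL2 hFsym hweak
end
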